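/- arXiv:1802.05468 — 10 statements merged into one kernel-verified Lean document; each statement's English description precedes it below -/
import Mathlib

section
/- Let A be an N×N real matrix with nonnegative off-diagonal entries and zero column sums. Then for every τ > 0 the matrix I − τA is invertible. -/
/-! `I - τA` is strictly diagonally dominant by columns: off the diagonal its column `k` has
absolute sum `τ ∑_{i ≠ k} A i k`, which is at most `-τ A k k` because the column sum of `A` is
nonpositive, and hence strictly below the diagonal entry `1 - τ A k k`. Gershgorin's theorem then
makes its determinant nonzero. -/

namespace Matrix

variable {ι : Type*} [Fintype ι] [DecidableEq ι]

theorem sum_erase_le_neg_diag_of_sum_col_nonpos {α : Type*} [AddCommGroup α] [PartialOrder α]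
    [IsOrderedAddMonoid α] (A : Matrix ι ι α) {k : ι} (hsum : ∑ i, A i k ≤ 0) :
    ∑ i ∈ Finset.univ.erase k, A i k ≤ -A k k := by
  rw [← Finset.add_sum_erase _ _ (Finset.mem_univ k)] at hsum
  exact le_neg_iff_add_nonpos_left.2 hsum

theorem sum_erase_norm_one_sub_smul_col (A : Matrix ι ι ℝ) (hoff : ∀ i j, i ≠ j → 0 ≤ A i j)
    {τ : ℝ} (hτ : 0 ≤ τ) (k : ι) :
    ∑ i ∈ Finset.univ.erase k, ‖(1 - τ • A) i k‖ = τ * ∑ i ∈ Finset.univ.erase k, A i k := by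
  rw [Finset.mul_sum]
  refine Finset.sum_congr rfl fun i hi => ?_
  have hik : i ≠ k := Finset.ne_of_mem_erase hi
  rw [sub_apply, one_apply_ne hik, zero_sub, smul_apply, smul_eq_mul, norm_neg,
    Real.norm_of_nonneg (mul_nonneg hτ (hoff i k hik))]

theorem isUnit_one_sub_smul_of_offDiag_nonneg_of_sum_col_nonpos (A : Matrix ι ι ℝ)
    (hoff : ∀ i j, i ≠ j → 0 ≤ A i j) (hsum : ∀ j, ∑ i, A i j ≤ 0) {τ : ℝ} (hτ : 0 ≤ τ) :
    IsUnit (1 - τ • A) := by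
  rw [isUnit_iff_isUnit_det, isUnit_iff_ne_zero]
  refine det_ne_zero_of_sum_col_lt_diag fun k => ?_
  have hdiag : (1 - τ • A) k k = 1 - τ * A k k := by
    rw [sub_apply, one_apply_eq, smul_apply, smul_eq_mul]
  have hdom := mul_le_mul_of_nonneg_left (A.sum_erase_le_neg_diag_of_sum_col_nonpos (hsum k)) hτ
  calc ∑ i ∈ Finset.univ.erase k, ‖(1 - τ • A) i k‖
      = τ * ∑ i ∈ Finset.univ.erase k, A i k := A.sum_erase_norm_one_sub_smul_col hoff hτ k
    _ < (1 - τ • A) k k := by rw [hdiag]; linarith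
    _ ≤ ‖(1 - τ • A) k k‖ := Real.le_norm_self _

end Matrix

/-- For an `N × N` real matrix `A` with nonnegative off-diagonal entries and zero
column sums, the implicit Euler matrix `I − τA` is invertible for every `τ > 0`. -/
theorem implicit_euler_invertible (N : ℕ) (A : Matrix (Fin N) (Fin N) ℝ)
    (hoff : ∀ i j, i ≠ j → 0 ≤ A i j) (hsum : ∀ j, ∑ i, A i j = 0) :
    ∀ τ : ℝ, 0 < τ → IsUnit ((1 : Matrix (Fin N) (Fin N) ℝ) - τ • A) := fun _ hτ =>
  A.isUnit_one_sub_smul_of_offDiag_nonneg_of_sum_col_nonpos hoff (fun j => (hsum j).le) hτ.le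
end

section
/- Let A be an N×N real matrix with nonnegative off-diagonal entries and zero column sums, and let τ > 0. Then every entry of the matrix (I − τA)^{-1} is nonnegative. Consequently, one implicit Euler step u^{k+1} = (I − τA)^{-1} u^k maps nonnegative vectors to nonnegative vectors, for every time step τ > 0. -/
/-!
`M = I − τA` has nonpositive off-diagonal entries and column sums equal to `1`. For such
a matrix, `y ᵥ* M ≥ 0` forces `y ≥ 0`: at a minimal entry `y m`, the `m`-th entry of
`y ᵥ* M` is at most `y m` times the `m`-th column sum. Hence `M` is invertible, and every
row `y` of `M⁻¹` satisfies `y ᵥ* M = Pi.single i 1 ≥ 0`, so it is nonnegative.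
-/

open Matrix

namespace Matrix

variable {n R : Type*} [Fintype n]

section OrderedRing

variable [CommRing R] [LinearOrder R] [IsStrictOrderedRing R]

theorem mulVec_nonneg {M : Matrix n n R} (hM : ∀ i j, 0 ≤ M i j) {u : n → R} (hu : 0 ≤ u) :
    0 ≤ M *ᵥ u :=
  fun i => Finset.sum_nonneg fun j _ => mul_nonneg (hM i j) (hu j)

theorem nonneg_of_vecMul_nonneg {M : Matrix n n R} (hoff : ∀ i j, i ≠ j → M i j ≤ 0)
    (hcol : ∀ j, 0 < ∑ i, M i j) {y : n → R} (hy : 0 ≤ y ᵥ* M) : 0 ≤ y := by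
  by_contra hneg
  obtain ⟨k, hk⟩ : ∃ k, y k < 0 := by simpa [Pi.le_def] using hneg
  obtain ⟨m, -, hmin⟩ := Finset.exists_min_image Finset.univ y ⟨k, Finset.mem_univ k⟩
  have hm : y m < 0 := (hmin k (Finset.mem_univ k)).trans_lt hk
  have hle : (y ᵥ* M) m ≤ y m * ∑ i, M i m := by
    rw [vecMul, dotProduct, Finset.mul_sum]
    refine Finset.sum_le_sum fun i _ => ?_
    rcases eq_or_ne i m with rfl | him
    · exact le_rfl
    · rw [mul_comm (y i), mul_comm (y m)]
      exact mul_le_mul_of_nonpos_left (hmin i (Finset.mem_univ i)) (hoff i m him)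
  linarith [show 0 ≤ (y ᵥ* M) m from hy m, mul_neg_of_neg_of_pos hm (hcol m)]

end OrderedRing

variable [DecidableEq n] [Field R] [LinearOrder R] [IsStrictOrderedRing R]
  {M : Matrix n n R} (hoff : ∀ i j, i ≠ j → M i j ≤ 0) (hcol : ∀ j, 0 < ∑ i, M i j)
include hoff hcol

theorem isUnit_of_offDiag_nonpos_of_colSum_pos : IsUnit M := by
  refine vecMul_injective_iff_isUnit.mp fun y z (heq : y ᵥ* M = z ᵥ* M) => ?_
  have hdiff : (y - z) ᵥ* M = 0 := by rw [sub_vecMul, heq, sub_self]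
  have hyz : 0 ≤ y - z := nonneg_of_vecMul_nonneg hoff hcol hdiff.ge
  have hzy : 0 ≤ z - y :=
    nonneg_of_vecMul_nonneg hoff hcol (by rw [← neg_sub, neg_vecMul, hdiff, neg_zero])
  exact le_antisymm (sub_nonneg.mp hzy) (sub_nonneg.mp hyz)

theorem inv_apply_nonneg_of_offDiag_nonpos_of_colSum_pos (i j : n) : 0 ≤ M⁻¹ i j := by
  have hM : IsUnit M.det :=
    (isUnit_iff_isUnit_det M).mp (isUnit_of_offDiag_nonpos_of_colSum_pos hoff hcol)
  have hrow : M⁻¹.row i ᵥ* M = Pi.single i 1 := by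
    rw [← single_one_vecMul, vecMul_vecMul, nonsing_inv_mul M hM, vecMul_one]
  have hsingle : (0 : n → R) ≤ Pi.single i 1 := Pi.single_nonneg.mpr zero_le_one
  exact nonneg_of_vecMul_nonneg hoff hcol (hrow ▸ hsingle) j

end Matrix

/-- For an `N × N` real matrix `A` with nonnegative off-diagonal entries and zero
column sums, and any `τ > 0`, every entry of `(I − τA)⁻¹` is nonnegative;
consequently one implicit Euler step maps nonnegative vectors to nonnegative
vectors, for every time step `τ > 0`. -/
theorem implicit_euler_nonneg (N : ℕ) (A : Matrix (Fin N) (Fin N) ℝ)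
    (hoff : ∀ i j, i ≠ j → 0 ≤ A i j) (hsum : ∀ j, ∑ i, A i j = 0)
    (τ : ℝ) (hτ : 0 < τ) :
    (∀ i j, 0 ≤ ((1 : Matrix (Fin N) (Fin N) ℝ) - τ • A)⁻¹ i j) ∧
    (∀ u : Fin N → ℝ, (∀ i, 0 ≤ u i) →
      ∀ i, 0 ≤ ((1 : Matrix (Fin N) (Fin N) ℝ) - τ • A)⁻¹.mulVec u i) := by
  have hMoff : ∀ i j, i ≠ j → (1 - τ • A) i j ≤ 0 := fun i j hij => by
    simpa [one_apply_ne hij] using mul_nonneg hτ.le (hoff i j hij)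
  have hMcol : ∀ j, 0 < ∑ i, (1 - τ • A) i j := fun j => by
    simp [one_apply, Finset.sum_sub_distrib, ← Finset.mul_sum, hsum j]
  have hinv := inv_apply_nonneg_of_offDiag_nonpos_of_colSum_pos hMoff hMcol
  exact ⟨hinv, fun u hu => mulVec_nonneg hinv hu⟩
end

section
/- Let A be an N×N real matrix with nonnegative off-diagonal entries and zero column sums, and let τ > 0. Then every column of (I − τA)^{-1} sums to 1; consequently one implicit Euler step u^{k+1} = (I − τA)^{-1} u^k preserves the sum of the entries of u, for every time step τ > 0. -/
/-!
Zero column sums say `1ᵀ A = 0`, so `1ᵀ (I - τA) = 1ᵀ`; as soon as `I - τA` is invertible this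
gives `1ᵀ (I - τA)⁻¹ = 1ᵀ`, i.e. unit column sums of the inverse, and then
`1ᵀ (I - τA)⁻¹ u = 1ᵀ u`. Invertibility holds because `I - τA` has nonpositive off-diagonal
entries and unit column sums, which makes it strictly diagonally dominant by columns.
-/

open Finset

namespace Matrix

variable {n m R : Type*} [Fintype n]

theorem one_vecMul_apply [Semiring R] (M : Matrix n m R) (j : m) :
    (1 ᵥ* M) j = ∑ i, M i j :=
  one_dotProduct _

theorem sum_mulVec_eq_sum_of_one_vecMul [Fintype m] [Semiring R] {M : Matrix n m R}
    (hM : 1 ᵥ* M = 1) (u : m → R) : ∑ i, (M *ᵥ u) i = ∑ j, u j := by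
  rw [← one_dotProduct, ← one_dotProduct, dotProduct_mulVec, hM]

variable [DecidableEq n]

theorem vecMul_nonsing_inv_eq_self [CommRing R] {B : Matrix n n R} {v : n → R}
    (hB : IsUnit B.det) (hv : v ᵥ* B = v) : v ᵥ* B⁻¹ = v :=
  calc v ᵥ* B⁻¹ = (v ᵥ* B) ᵥ* B⁻¹ := by rw [hv]
    _ = v := by rw [vecMul_vecMul, mul_nonsing_inv B hB, vecMul_one]

theorem det_ne_zero_of_offDiag_nonpos_of_sum_col_pos {B : Matrix n n ℝ}
    (hoff : ∀ i j, i ≠ j → B i j ≤ 0) (hcol : ∀ j, 0 < ∑ i, B i j) : B.det ≠ 0 := by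
  refine det_ne_zero_of_sum_col_lt_diag fun k => ?_
  have hnorm : ∀ i ∈ univ.erase k, ‖B i k‖ = -B i k := fun i hi => by
    rw [Real.norm_eq_abs, abs_of_nonpos (hoff i k (ne_of_mem_erase hi))]
  have hrest : ∑ i ∈ univ.erase k, B i k ≤ 0 :=
    sum_nonpos fun i hi => hoff i k (ne_of_mem_erase hi)
  have hsplit := add_sum_erase univ (fun i => B i k) (mem_univ k)
  have hdiag : 0 < B k k := by linarith [hcol k]
  rw [sum_congr rfl hnorm, sum_neg_distrib, Real.norm_of_nonneg hdiag.le]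
  linarith [hcol k]

end Matrix

open Matrix

/-- For an `N × N` real matrix `A` with nonnegative off-diagonal entries and zero
column sums, and any `τ > 0`, every column of `(I − τA)⁻¹` sums to `1`;
consequently one implicit Euler step preserves the sum of the entries of `u`. -/
theorem implicit_euler_preserves_sum (N : ℕ) (A : Matrix (Fin N) (Fin N) ℝ)
    (hoff : ∀ i j, i ≠ j → 0 ≤ A i j) (hsum : ∀ j, ∑ i, A i j = 0)
    (τ : ℝ) (hτ : 0 < τ) :
    (∀ j, ∑ i, ((1 : Matrix (Fin N) (Fin N) ℝ) - τ • A)⁻¹ i j = 1) ∧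
    (∀ u : Fin N → ℝ,
      ∑ i, ((1 : Matrix (Fin N) (Fin N) ℝ) - τ • A)⁻¹.mulVec u i = ∑ i, u i) := by
  set B : Matrix (Fin N) (Fin N) ℝ := 1 - τ • A
  have hA : 1 ᵥ* A = 0 := funext fun j => (one_vecMul_apply A j).trans (hsum j)
  have hB : 1 ᵥ* B = 1 := by
    rw [vecMul_sub, vecMul_one, vecMul_smul, hA, smul_zero, sub_zero]
  have hBoff : ∀ i j, i ≠ j → B i j ≤ 0 := fun i j hij => by
    simpa [B, one_apply_ne hij] using mul_nonneg hτ.le (hoff i j hij)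
  have hBcol : ∀ j, 0 < ∑ i, B i j := fun j => by
    rw [← one_vecMul_apply, hB, Pi.one_apply]
    exact one_pos
  have hdet : IsUnit B.det :=
    isUnit_iff_ne_zero.mpr (det_ne_zero_of_offDiag_nonpos_of_sum_col_pos hBoff hBcol)
  have hBinv : 1 ᵥ* B⁻¹ = 1 := vecMul_nonsing_inv_eq_self hdet hB
  exact ⟨fun j => by rw [← one_vecMul_apply, hBinv, Pi.one_apply],
    sum_mulVec_eq_sum_of_one_vecMul hBinv⟩
end

section
/- Let A be an N×N real matrix with nonnegative off-diagonal entries and zero column sums, and let τ > 0. Then the implicit Euler step matrix (I − τA)^{-1} is nonexpansive in the ℓ¹ norm: for every u ∈ ℝ^N, ∑_i |((I − τA)^{-1} u)_i| ≤ ∑_i |u_i|. In particular the implicit Euler scheme is unconditionally stable: the ℓ¹ norms of the iterates u^{k+1} = (I − τA)^{-1} u^k are nonincreasing for every time step τ > 0. -/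
/-!
Put `B = 1 - τ A`: its off-diagonal entries are `≤ 0` and its columns sum to `1`. For such
a `B`, comparing `(B v)ᵢ` with its diagonal term gives `∑ⱼ Bᵢⱼ |vⱼ| ≤ |(B v)ᵢ|`, and summing
over `i` yields `‖v‖₁ ≤ ‖B v‖₁`. Hence `B` is injective, so invertible, and `B⁻¹` is
`ℓ¹`-nonexpansive.
-/

open Finset Matrix

namespace Matrix

variable {ι R : Type*} [Fintype ι] [Field R] [LinearOrder R] [IsStrictOrderedRing R]

theorem sum_mul_abs_le_abs_mulVec (B : Matrix ι ι R) (hoff : ∀ i j, i ≠ j → B i j ≤ 0)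
    (i : ι) (hdiag : 0 ≤ B i i) (v : ι → R) : ∑ j, B i j * |v j| ≤ |(B *ᵥ v) i| := by
  classical
  have hoff_abs : ∀ j ∈ univ.erase i, |B i j * v j| = -(B i j * |v j|) := fun j hj => by
    rw [abs_mul, abs_of_nonpos (hoff i j (ne_of_mem_erase hj).symm), neg_mul]
  calc ∑ j, B i j * |v j|
      = |B i i * v i| - ∑ j ∈ univ.erase i, |B i j * v j| := by
        rw [← add_sum_erase _ _ (mem_univ i), sum_congr rfl hoff_abs, sum_neg_distrib,
          abs_mul, abs_of_nonneg hdiag, sub_neg_eq_add]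
    _ ≤ |B i i * v i| - |∑ j ∈ univ.erase i, B i j * v j| := by
        gcongr; exact abs_sum_le_sum_abs _ _
    _ ≤ |B i i * v i + ∑ j ∈ univ.erase i, B i j * v j| := abs_sub_abs_le_abs_add _ _
    _ = |(B *ᵥ v) i| := by rw [add_sum_erase _ (fun j => B i j * v j) (mem_univ i)]; rfl

theorem sum_abs_le_sum_abs_mulVec (B : Matrix ι ι R) (hoff : ∀ i j, i ≠ j → B i j ≤ 0)
    (hcol : ∀ j, 1 ≤ ∑ i, B i j) (v : ι → R) : ∑ j, |v j| ≤ ∑ i, |(B *ᵥ v) i| := by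
  classical
  have hdiag (j : ι) : 0 ≤ B j j := by
    have hrest : ∑ i ∈ univ.erase j, B i j ≤ 0 :=
      sum_nonpos fun i hi => hoff i j (ne_of_mem_erase hi)
    linarith [add_sum_erase univ (B · j) (mem_univ j), hcol j]
  calc ∑ j, |v j|
      ≤ ∑ j, (∑ i, B i j) * |v j| :=
        sum_le_sum fun j _ => le_mul_of_one_le_left (abs_nonneg _) (hcol j)
    _ = ∑ i, ∑ j, B i j * |v j| := by simp_rw [sum_mul]; exact sum_comm
    _ ≤ ∑ i, |(B *ᵥ v) i| :=
        sum_le_sum fun i _ => sum_mul_abs_le_abs_mulVec B hoff i (hdiag i) v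

theorem mulVec_injective_of_sum_abs_le {B : Matrix ι ι R}
    (h : ∀ v, ∑ j, |v j| ≤ ∑ i, |(B *ᵥ v) i|) : Function.Injective B.mulVec := by
  intro x y hxy
  have hzero : ∑ j, |(x - y) j| ≤ 0 := by simpa [mulVec_sub, hxy] using h (x - y)
  funext j
  have := (sum_eq_zero_iff_of_nonneg fun j _ => abs_nonneg ((x - y) j)).1
    (le_antisymm hzero (sum_nonneg fun j _ => abs_nonneg _)) j (mem_univ j)
  simpa [sub_eq_zero] using this

theorem sum_abs_inv_mulVec_le [DecidableEq ι] (B : Matrix ι ι R)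
    (hoff : ∀ i j, i ≠ j → B i j ≤ 0) (hcol : ∀ j, 1 ≤ ∑ i, B i j) (u : ι → R) :
    ∑ i, |(B⁻¹ *ᵥ u) i| ≤ ∑ i, |u i| := by
  have hexp := sum_abs_le_sum_abs_mulVec B hoff hcol
  have hunit : IsUnit B.det := (isUnit_iff_isUnit_det B).1 <|
    mulVec_injective_iff_isUnit.1 (mulVec_injective_of_sum_abs_le hexp)
  simpa [mulVec_mulVec, mul_nonsing_inv B hunit] using hexp (B⁻¹ *ᵥ u)

end Matrix

/-- For an `N × N` real matrix `A` with nonnegative off-diagonal entries and zero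
column sums, and any `τ > 0`, the implicit Euler step matrix `(I − τA)⁻¹` is
nonexpansive in the `ℓ¹` norm; in particular the `ℓ¹` norms of the implicit Euler
iterates `u^{k+1} = (I − τA)⁻¹ u^k` are nonincreasing (unconditional stability). -/
theorem implicit_euler_l1_nonexpansive (N : ℕ) (A : Matrix (Fin N) (Fin N) ℝ)
    (hoff : ∀ i j, i ≠ j → 0 ≤ A i j) (hsum : ∀ j, ∑ i, A i j = 0)
    (τ : ℝ) (hτ : 0 < τ) :
    (∀ u : Fin N → ℝ,
      ∑ i, |((1 : Matrix (Fin N) (Fin N) ℝ) - τ • A)⁻¹.mulVec u i| ≤ ∑ i, |u i|) ∧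
    (∀ f : Fin N → ℝ, ∀ k : ℕ,
      ∑ i, ((((1 : Matrix (Fin N) (Fin N) ℝ) - τ • A)⁻¹ ^ (k + 1)).mulVec f i |> abs)
        ≤ ∑ i, ((((1 : Matrix (Fin N) (Fin N) ℝ) - τ • A)⁻¹ ^ k).mulVec f i |> abs)) := by
  set B : Matrix (Fin N) (Fin N) ℝ := 1 - τ • A
  have hoffB : ∀ i j, i ≠ j → B i j ≤ 0 := fun i j hij => by
    simpa [B, one_apply_ne hij] using mul_nonneg hτ.le (hoff i j hij)
  have hcolB : ∀ j, 1 ≤ ∑ i, B i j := fun j => by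
    simp [B, one_apply, sum_sub_distrib, ← mul_sum, hsum]
  have hstep := sum_abs_inv_mulVec_le B hoffB hcolB
  refine ⟨hstep, fun f k => ?_⟩
  rw [pow_succ', ← mulVec_mulVec]
  exact hstep _
end

section
/- Let A₁ and A₂ be N×N real matrices, each with nonnegative off-diagonal entries and zero column sums, and let τ > 0. Then the AOS step matrix M = (1/2)·[(I − 2τA₁)^{-1} + (I − 2τA₂)^{-1}] has all entries nonnegative and every column of M sums to 1. Consequently, the AOS iteration u^{k+1} = M u^k preserves the sum of the entries of u, maps nonnegative vectors to nonnegative vectors, and is nonexpansive in the ℓ¹ norm, for every time step τ > 0 (unconditional stability of AOS). -/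
/-!
`I − 2τAₙ` has nonpositive off-diagonal entries and column sums `1`. For such a matrix `B` a
discrete minimum principle holds: if `x ᵥ* B ≥ 0` then `x ≥ 0`, since at a minimising index `m`
the entry `(x ᵥ* B) m` is a combination of the `x k` with weights summing to `1` that is at most
`x m`. Applied to `±v` with `v ᵥ* B = 0` it makes `B` invertible, and applied to the rows of
`B⁻¹` it makes `B⁻¹` nonnegative; `B⁻¹` inherits the column sums `1` from `B`. So both
resolvents are column stochastic, hence so is their average `M`, and column stochastic matrices
preserve sums and nonnegativity and do not increase the `ℓ¹` norm.
-/

open Finset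

namespace Matrix

variable {n R : Type*} [Fintype n]

section ColStochastic

variable [DecidableEq n] [Ring R] [LinearOrder R] [IsOrderedRing R]

theorem sum_abs_mulVec_le_of_mem_colStochastic {M : Matrix n n R}
    (hM : M ∈ colStochastic R n) (x : n → R) : ∑ i, |(M *ᵥ x) i| ≤ ∑ i, |x i| :=
  calc ∑ i, |(M *ᵥ x) i| ≤ ∑ i, ∑ j, M i j * |x j| := by
        refine sum_le_sum fun i _ => (abs_sum_le_sum_abs _ _).trans_eq ?_
        simp only [abs_mul, abs_of_nonneg (nonneg_of_mem_colStochastic hM)]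
    _ = ∑ i, |x i| := sum_mulVec_of_mem_colStochastic hM

end ColStochastic

variable [Field R] [LinearOrder R] [IsStrictOrderedRing R] {B : Matrix n n R}

theorem nonneg_of_nonneg_vecMul (hoff : ∀ i j, i ≠ j → B i j ≤ 0)
    (hcol : ∀ j, ∑ i, B i j = 1) {x : n → R} (hx : 0 ≤ x ᵥ* B) : 0 ≤ x := by
  intro i
  obtain ⟨m, -, hm⟩ := exists_min_image univ x ⟨i, mem_univ i⟩
  have hxB : (x ᵥ* B) m ≤ x m :=
    calc (x ᵥ* B) m = ∑ k, x k * B k m := rfl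
      _ ≤ ∑ k, x m * B k m := by
        refine sum_le_sum fun k _ => ?_
        rcases eq_or_ne k m with rfl | hkm
        · rfl
        · exact mul_le_mul_of_nonpos_right (hm k (mem_univ k)) (hoff k m hkm)
      _ = x m := by rw [← mul_sum, hcol, mul_one]
  exact (hx m).trans (hxB.trans (hm i (mem_univ i)))

variable [DecidableEq n]

theorem isUnit_det_of_sum_col_eq_one (hoff : ∀ i j, i ≠ j → B i j ≤ 0)
    (hcol : ∀ j, ∑ i, B i j = 1) : IsUnit B.det := by
  rw [isUnit_iff_ne_zero]
  intro hdet
  obtain ⟨v, hv, hvB⟩ := exists_vecMul_eq_zero_iff.mpr hdet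
  have hpos : 0 ≤ v := nonneg_of_nonneg_vecMul hoff hcol hvB.ge
  have hneg : 0 ≤ -v := nonneg_of_nonneg_vecMul hoff hcol (by rw [neg_vecMul, hvB, neg_zero])
  exact hv (le_antisymm (neg_nonneg.mp hneg) hpos)

theorem nonsing_inv_mem_colStochastic (hoff : ∀ i j, i ≠ j → B i j ≤ 0)
    (hcol : ∀ j, ∑ i, B i j = 1) : B⁻¹ ∈ colStochastic R n := by
  have hB := isUnit_det_of_sum_col_eq_one hoff hcol
  refine mem_colStochastic_iff_sum.mpr ⟨fun i => nonneg_of_nonneg_vecMul hoff hcol ?_, fun j => ?_⟩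
  · rw [← mul_apply_eq_vecMul, nonsing_inv_mul B hB]
    exact fun k => by by_cases hik : i = k <;> simp [one_apply, hik]
  · calc ∑ i, B⁻¹ i j = ∑ k, (∑ i, B i k) * B⁻¹ k j := by simp only [hcol, one_mul]
      _ = ∑ i, (B * B⁻¹) i j := by simp only [mul_apply, sum_mul]; exact sum_comm
      _ = 1 := by simp [mul_nonsing_inv B hB, one_apply]

theorem nonsing_inv_one_sub_smul_mem_colStochastic {A : Matrix n n R}
    (hoff : ∀ i j, i ≠ j → 0 ≤ A i j) (hsum : ∀ j, ∑ i, A i j = 0) {t : R} (ht : 0 ≤ t) :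
    (1 - t • A)⁻¹ ∈ colStochastic R n := by
  refine nonsing_inv_mem_colStochastic (fun i j hij => ?_) fun j => ?_
  · simpa [one_apply_ne hij] using mul_nonneg ht (hoff i j hij)
  · simp [sum_sub_distrib, ← mul_sum, hsum, one_apply]

end Matrix

open Matrix in
/-- Unconditional stability of the AOS scheme: if `A₁`, `A₂` are `N × N` real
matrices with nonnegative off-diagonal entries and zero column sums, then for every
`τ > 0` the AOS step matrix `M = (1/2)·[(I − 2τA₁)⁻¹ + (I − 2τA₂)⁻¹]` has
nonnegative entries and all column sums equal to `1`; consequently the AOS iteration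
preserves the sum of entries, maps nonnegative vectors to nonnegative vectors, and
is nonexpansive in the `ℓ¹` norm. -/
theorem aos_unconditional_stability (N : ℕ) (A₁ A₂ : Matrix (Fin N) (Fin N) ℝ)
    (hoff₁ : ∀ i j, i ≠ j → 0 ≤ A₁ i j) (hsum₁ : ∀ j, ∑ i, A₁ i j = 0)
    (hoff₂ : ∀ i j, i ≠ j → 0 ≤ A₂ i j) (hsum₂ : ∀ j, ∑ i, A₂ i j = 0)
    (τ : ℝ) (hτ : 0 < τ)
    (M : Matrix (Fin N) (Fin N) ℝ)
    (hM : M = (1 / 2 : ℝ) • (((1 : Matrix (Fin N) (Fin N) ℝ) - (2 * τ) • A₁)⁻¹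
      + ((1 : Matrix (Fin N) (Fin N) ℝ) - (2 * τ) • A₂)⁻¹)) :
    (∀ i j, 0 ≤ M i j) ∧
    (∀ j, ∑ i, M i j = 1) ∧
    (∀ u : Fin N → ℝ, ∑ i, M.mulVec u i = ∑ i, u i) ∧
    (∀ u : Fin N → ℝ, (∀ i, 0 ≤ u i) → ∀ i, 0 ≤ M.mulVec u i) ∧
    (∀ u : Fin N → ℝ, ∑ i, |M.mulVec u i| ≤ ∑ i, |u i|) := by
  have h2τ : 0 ≤ 2 * τ := by positivity
  have hM : M ∈ colStochastic ℝ (Fin N) := by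
    rw [hM, smul_add]
    exact convex_colStochastic
      (nonsing_inv_one_sub_smul_mem_colStochastic hoff₁ hsum₁ h2τ)
      (nonsing_inv_one_sub_smul_mem_colStochastic hoff₂ hsum₂ h2τ)
      (by norm_num) (by norm_num) (by norm_num)
  exact ⟨fun i j => nonneg_of_mem_colStochastic hM, sum_col_of_mem_colStochastic hM,
    fun u => sum_mulVec_of_mem_colStochastic hM, fun u => nonneg_mulVec_of_mem_colStochastic hM,
    sum_abs_mulVec_le_of_mem_colStochastic hM⟩
end

section
/- Fix N ≥ 2, a grid size h > 0, and a vector v ∈ ℝ^N with strictly positive entries. Define the canonical 1D osmosis drift at the half grid points by d_{i+1/2} = (2/h)·(v_{i+1} − v_i)/(v_{i+1} + v_i) for i = 1,…,N−1, and let A be the N×N tridiagonal matrix acting by (Au)_i = (u_{i+1} − 2u_i + u_{i−1})/h² − [ d_{i+1/2}·(u_{i+1} + u_i)/2 − d_{i−1/2}·(u_i + u_{i−1})/2 ]/h for interior indices 1 < i < N, with the homogeneous no-flux boundary modification at i = 1 and i = N (i.e., the terms involving d_{1/2}, u_0 and d_{N+1/2}, u_{N+1} are omitted). Then A v = 0;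 that is, v lies in the kernel of the discrete osmosis operator with canonical drift derived from v. -/
/-- The canonical 1D osmosis drift at the half grid point `i + 1/2` (with 0-based
indices `i = 0, …, N−2`), derived from the positive reference image `v`:
`d_{i+1/2} = (2/h) · (v_{i+1} − v_i)/(v_{i+1} + v_i)`. -/
noncomputable def osmosisDrift (h : ℝ) (v : ℕ → ℝ) (i : ℕ) : ℝ :=
  (2 / h) * (v (i + 1) - v i) / (v (i + 1) + v i)

/-- The action of the 1D discrete osmosis operator (tridiagonal matrix) with
canonical drift derived from `v`, on a vector `u` indexed by `i = 0, …, N−1`: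
at interior points
`(Au)_i = (u_{i+1} − 2u_i + u_{i−1})/h² −
  [d_{i+1/2}·(u_{i+1}+u_i)/2 − d_{i−1/2}·(u_i+u_{i−1})/2]/h`,
with the homogeneous no-flux modification at the boundary indices `i = 0` and
`i = N−1` (the terms involving the outer half grid points are omitted). -/
noncomputable def osmosisOp (N : ℕ) (h : ℝ) (v : ℕ → ℝ) (u : ℕ → ℝ) (i : ℕ) : ℝ :=
  if i = 0 then
    (u 1 - u 0) / h ^ 2 - (osmosisDrift h v 0 * (u 1 + u 0) / 2) / h
  else if i = N - 1 then
    (u (N - 2) - u (N - 1)) / h ^ 2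
      + (osmosisDrift h v (N - 2) * (u (N - 1) + u (N - 2)) / 2) / h
  else
    (u (i + 1) - 2 * u i + u (i - 1)) / h ^ 2
      - (osmosisDrift h v i * (u (i + 1) + u i) / 2
          - osmosisDrift h v (i - 1) * (u i + u (i - 1)) / 2) / h

/-- The positive reference image `v` lies in the kernel of the discrete 1D osmosis
operator with canonical drift derived from `v`: `A v = 0`. -/
theorem osmosisOp_ref_in_kernel (N : ℕ) (hN : 2 ≤ N) (h : ℝ) (hh : 0 < h)
    (v : ℕ → ℝ) (hv : ∀ i < N, 0 < v i) :
    ∀ i < N, osmosisOp N h v v i = 0 := by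
  have hhne : h ≠ 0 := ne_of_gt hh
  have key : ∀ i, v (i + 1) + v i ≠ 0 →
      osmosisDrift h v i * (v (i + 1) + v i) / 2 = (v (i + 1) - v i) / h := by
    intro i hne
    unfold osmosisDrift
    field_simp
  intro i hi
  unfold osmosisOp
  split_ifs with h0 h1
  · have k := key 0 (by have := hv 0 (by omega); have := hv 1 (by omega); positivity)
    rw [k]
    field_simp
    ring
  · have e : N - 2 + 1 = N - 1 := by omega
    have k := key (N - 2) (by
      rw [e]
      have := hv (N - 2) (by omega); have := hv (N - 1) (by omega); positivity)
    rw [e] at k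
    rw [k]
    field_simp
    ring
  · have e : i - 1 + 1 = i := by omega
    have k1 := key i (by
      have := hv i hi; have := hv (i + 1) (by omega); positivity)
    have k2 := key (i - 1) (by
      rw [e]
      have := hv i hi; have := hv (i - 1) (by omega); positivity)
    rw [e] at k2
    rw [k1, k2]
    field_simp
    ring
end

section
/- Let A be an N×N real matrix with nonnegative off-diagonal entries, zero column sums, and irreducible (i.e., for every pair of indices i ≠ j there is a finite sequence i = i₀, i₁, …, i_m = j with A_{i_{l+1} i_l} ≠ 0 for all l). Then the kernel of A is one-dimensional and is spanned by a vector w all of whose entries are strictly positive. -/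
/-!
If `A *ᵥ v = 0`, then, because the off-diagonal entries are nonnegative, the triangle inequality
gives `A *ᵥ |v| ≥ 0` entrywise; zero column sums make the entries of `A *ᵥ |v|` sum to `0`, so
`|v|` lies in the kernel as well. For a nonnegative kernel vector `u`, the `i`-th equation is a
sum of nonnegative terms, so `u i = 0` and `A i j ≠ 0` force `u j = 0`; following the paths
given by irreducibility backwards, a single zero entry makes `u` vanish. Hence every nonzero
kernel vector `v` has no zero entry, `|v|` is a strictly positive kernel vector (one exists as
`det A = 0`), and any kernel vector minus a suitable multiple of it has a zero entry, so vanishes.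
-/

/-- `A` is irreducible: for every pair of indices `i ≠ j` there is a finite sequence
`i = i₀, i₁, …, i_m = j` with `A (i_{l+1}) (i_l) ≠ 0` for all `l`. -/
def MatrixIrreducible {N : ℕ} (A : Matrix (Fin N) (Fin N) ℝ) : Prop :=
  ∀ i j : Fin N, i ≠ j → ∃ (m : ℕ) (c : ℕ → Fin N),
    c 0 = i ∧ c m = j ∧ ∀ l < m, A (c (l + 1)) (c l) ≠ 0

open Finset

namespace Matrix

section Kernel

variable {ι : Type*} [Fintype ι] {A : Matrix ι ι ℝ}

theorem sum_mulVec_eq_zero_of_sum_col_eq_zero (hsum : ∀ j, ∑ i, A i j = 0) (v : ι → ℝ) :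
    ∑ i, (A *ᵥ v) i = 0 := by
  simp only [mulVec, dotProduct]
  rw [Finset.sum_comm]
  simp [← Finset.sum_mul, hsum]

theorem det_eq_zero_of_sum_col_eq_zero [DecidableEq ι] [Nonempty ι]
    (hsum : ∀ j, ∑ i, A i j = 0) : A.det = 0 := by
  refine exists_vecMul_eq_zero_iff.mp ⟨1, one_ne_zero, funext fun j => ?_⟩
  simpa [vecMul, dotProduct] using hsum j

theorem mulVec_abs_nonneg_of_mulVec_eq_zero [DecidableEq ι]
    (hoff : ∀ i j, i ≠ j → 0 ≤ A i j) {v : ι → ℝ} (hv : A *ᵥ v = 0) (i : ι) :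
    0 ≤ (A *ᵥ |v|) i := by
  have hrow : A i i * v i + ∑ j ∈ univ.erase i, A i j * v j = 0 := by
    rw [add_sum_erase _ (fun j => A i j * v j) (mem_univ i)]
    exact congrFun hv i
  have hoffdiag : ∑ j ∈ univ.erase i, A i j * |v j| = ∑ j ∈ univ.erase i, |A i j * v j| :=
    sum_congr rfl fun j hj => by
      rw [abs_mul, abs_of_nonneg (hoff i j (ne_of_mem_erase hj).symm)]
  calc (0 : ℝ) ≤ A i i * |v i| + |A i i| * |v i| := by
        nlinarith [neg_abs_le (A i i), abs_nonneg (v i)]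
    _ = A i i * |v i| + |∑ j ∈ univ.erase i, A i j * v j| := by
        rw [← abs_mul, ← neg_eq_of_add_eq_zero_right hrow, abs_neg]
    _ ≤ A i i * |v i| + ∑ j ∈ univ.erase i, A i j * |v j| := by
        rw [hoffdiag]
        exact add_le_add_right (abs_sum_le_sum_abs _ _) _
    _ = (A *ᵥ |v|) i := add_sum_erase _ (fun j => A i j * |v j|) (mem_univ i)

theorem mulVec_abs_eq_zero [DecidableEq ι] (hoff : ∀ i j, i ≠ j → 0 ≤ A i j)
    (hsum : ∀ j, ∑ i, A i j = 0) {v : ι → ℝ} (hv : A *ᵥ v = 0) : A *ᵥ |v| = 0 :=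
  funext fun i =>
    (sum_eq_zero_iff_of_nonneg fun k _ => mulVec_abs_nonneg_of_mulVec_eq_zero hoff hv k).mp
      (sum_mulVec_eq_zero_of_sum_col_eq_zero hsum |v|) i (mem_univ i)

theorem apply_eq_zero_of_mulVec_eq_zero_of_nonneg [DecidableEq ι]
    (hoff : ∀ i j, i ≠ j → 0 ≤ A i j) {u : ι → ℝ} (hu : A *ᵥ u = 0) (hnonneg : 0 ≤ u)
    {i j : ι} (hi : u i = 0) (hij : A i j ≠ 0) : u j = 0 := by
  have hterm_nonneg : ∀ k ∈ univ, 0 ≤ A i k * u k := fun k _ => by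
    rcases eq_or_ne i k with rfl | hik
    · simp [hi]
    · exact mul_nonneg (hoff i k hik) (hnonneg k)
  have hterm := (sum_eq_zero_iff_of_nonneg hterm_nonneg).mp (congrFun hu i) j (mem_univ j)
  exact (mul_eq_zero.mp hterm).resolve_left hij

end Kernel

section Irreducible

variable {N : ℕ} {A : Matrix (Fin N) (Fin N) ℝ}

theorem eq_zero_of_mulVec_eq_zero_of_nonneg_of_apply_eq_zero
    (hoff : ∀ i j, i ≠ j → 0 ≤ A i j) (hirr : MatrixIrreducible A) {u : Fin N → ℝ}
    (hu : A *ᵥ u = 0) (hnonneg : 0 ≤ u)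
    {j : Fin N} (hj : u j = 0) : u = 0 := by
  funext i
  rcases eq_or_ne i j with rfl | hij
  · exact hj
  obtain ⟨m, c, rfl, rfl, hpath⟩ := hirr i j hij
  have hzero_along_path : ∀ l ≤ m, u (c l) = 0 := fun _ hl =>
    Nat.decreasingInduction (motive := fun l _ => u (c l) = 0)
      (fun k hk hnext =>
        apply_eq_zero_of_mulVec_eq_zero_of_nonneg hoff hu hnonneg hnext (hpath k hk))
      hj hl
  exact hzero_along_path 0 m.zero_le

theorem eq_zero_of_mulVec_eq_zero_of_apply_eq_zero (hoff : ∀ i j, i ≠ j → 0 ≤ A i j)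
    (hsum : ∀ j, ∑ i, A i j = 0) (hirr : MatrixIrreducible A) {v : Fin N → ℝ}
    (hv : A *ᵥ v = 0) {j : Fin N} (hj : v j = 0) : v = 0 := by
  have habs : |v| = 0 :=
    eq_zero_of_mulVec_eq_zero_of_nonneg_of_apply_eq_zero hoff hirr
      (mulVec_abs_eq_zero hoff hsum hv) (abs_nonneg v) (j := j) (by simp [hj])
  funext i
  simpa using congrFun habs i

theorem exists_eq_smul_of_mulVec_eq_zero [Nonempty (Fin N)]
    (hoff : ∀ i j, i ≠ j → 0 ≤ A i j) (hsum : ∀ j, ∑ i, A i j = 0) (hirr : MatrixIrreducible A)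
    {w v : Fin N → ℝ} (hwpos : ∀ i, 0 < w i) (hw : A *ᵥ w = 0) (hv : A *ᵥ v = 0) :
    ∃ c : ℝ, v = c • w := by
  obtain ⟨i₀⟩ := ‹Nonempty (Fin N)›
  refine ⟨v i₀ / w i₀, sub_eq_zero.mp ?_⟩
  refine eq_zero_of_mulVec_eq_zero_of_apply_eq_zero hoff hsum hirr (j := i₀) ?_ ?_
  · simp [mulVec_sub, mulVec_smul, hv, hw]
  · simp [div_mul_cancel₀ _ (hwpos i₀).ne']

end Irreducible

end Matrix

/-- For an irreducible `N × N` real matrix `A` with nonnegative off-diagonal entries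
and zero column sums, the kernel of `A` is one-dimensional and spanned by a vector
with strictly positive entries. -/
theorem osmosis_kernel_positive (N : ℕ) (A : Matrix (Fin N) (Fin N) ℝ)
    (hoff : ∀ i j, i ≠ j → 0 ≤ A i j) (hsum : ∀ j, ∑ i, A i j = 0)
    (hirr : MatrixIrreducible A) :
    ∃ w : Fin N → ℝ, (∀ i, 0 < w i) ∧ A.mulVec w = 0 ∧
      ∀ u : Fin N → ℝ, A.mulVec u = 0 → ∃ c : ℝ, u = c • w := by
  rcases isEmpty_or_nonempty (Fin N) with _ | _
  · exact ⟨0, isEmptyElim, Subsingleton.elim _ _, fun _ _ => ⟨0, Subsingleton.elim _ _⟩⟩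
  obtain ⟨v, hv0, hv⟩ :=
    Matrix.exists_mulVec_eq_zero_iff.mpr (Matrix.det_eq_zero_of_sum_col_eq_zero hsum)
  have hw : A.mulVec |v| = 0 := Matrix.mulVec_abs_eq_zero hoff hsum hv
  have hwpos : ∀ i, 0 < |v| i := fun i => abs_pos.mpr fun hi =>
    hv0 (Matrix.eq_zero_of_mulVec_eq_zero_of_apply_eq_zero hoff hsum hirr hv hi)
  exact ⟨|v|, hwpos, hw, fun u hu =>
    Matrix.exists_eq_smul_of_mulVec_eq_zero hoff hsum hirr hwpos hw hu⟩
end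

section
/- Let A be an N×N real matrix with nonnegative off-diagonal entries, zero column sums, and irreducible (for every pair of indices i ≠ j there is a finite sequence i = i₀, i₁, …, i_m = j with A_{i_{l+1} i_l} ≠ 0 for all l). Let f ∈ ℝ^N have strictly positive entries. Then as t → ∞ the semi-discrete osmosis solution exp(tA) f converges to the unique vector w in the kernel of A satisfying ∑_i w_i = ∑_i f_i, and this w has strictly positive entries. -/
namespace OsmosisAux

open NormedSpace Filter Matrix

variable {N : ℕ}

lemma entry_hasSum (M : Matrix (Fin N) (Fin N) ℝ) (j i : Fin N) :
    HasSum (fun n : ℕ => ((n.factorial : ℝ))⁻¹ * (M ^ n) j i) (exp M j i) := by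
  letI : SeminormedRing (Matrix (Fin N) (Fin N) ℝ) := Matrix.linftyOpSemiNormedRing
  letI : NormedRing (Matrix (Fin N) (Fin N) ℝ) := Matrix.linftyOpNormedRing
  letI : NormedAlgebra ℝ (Matrix (Fin N) (Fin N) ℝ) := Matrix.linftyOpNormedAlgebra
  have hs : Summable fun n : ℕ => ((n.factorial : ℝ))⁻¹ • M ^ n := expSeries_summable' M
  have hcont : Continuous fun P : Matrix (Fin N) (Fin N) ℝ => P j i := by
    exact continuous_apply_apply j i
  have hmap := hs.hasSum.map
    (AddMonoidHom.mk' (fun P : Matrix (Fin N) (Fin N) ℝ => P j i) (fun _ _ => rfl))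
    hcont
  have he : exp M = ∑' n : ℕ, ((n.factorial : ℝ))⁻¹ • M ^ n := by
    rw [exp_eq_tsum ℝ]
  rw [he]
  exact hmap

lemma exp_entry (M : Matrix (Fin N) (Fin N) ℝ) (j i : Fin N) :
    exp M j i = ∑' n : ℕ, ((n.factorial : ℝ))⁻¹ * (M ^ n) j i :=
  (entry_hasSum M j i).tsum_eq.symm

lemma pow_entry_nonneg {M : Matrix (Fin N) (Fin N) ℝ} (hM : ∀ a b, 0 ≤ M a b) :
    ∀ n a b, 0 ≤ (M ^ n) a b := by
  intro n
  induction n with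
  | zero =>
    intro a b
    rw [pow_zero]
    by_cases h : a = b <;> simp [Matrix.one_apply, h]
  | succ n ih =>
    intro a b
    rw [pow_succ, Matrix.mul_apply]
    exact Finset.sum_nonneg fun k _ => mul_nonneg (ih a k) (hM k b)

lemma exp_entry_nonneg {M : Matrix (Fin N) (Fin N) ℝ} (hM : ∀ a b, 0 ≤ M a b) (j i : Fin N) :
    0 ≤ exp M j i := by
  rw [exp_entry]
  exact tsum_nonneg fun n =>
    mul_nonneg (inv_nonneg.2 (Nat.cast_nonneg _)) (pow_entry_nonneg hM n j i)

lemma le_exp_entry {M : Matrix (Fin N) (Fin N) ℝ} (hM : ∀ a b, 0 ≤ M a b) (m : ℕ) (j i : Fin N) :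
    ((m.factorial : ℝ))⁻¹ * (M ^ m) j i ≤ exp M j i := by
  rw [exp_entry]
  exact Summable.le_tsum (entry_hasSum M j i).summable m fun n _ =>
    mul_nonneg (inv_nonneg.2 (Nat.cast_nonneg _)) (pow_entry_nonneg hM n j i)

lemma pow_chain_pos {M : Matrix (Fin N) (Fin N) ℝ} (hM : ∀ a b, 0 ≤ M a b)
    (m : ℕ) (c : ℕ → Fin N) (hc : ∀ l < m, 0 < M (c (l + 1)) (c l)) :
    0 < (M ^ m) (c m) (c 0) := by
  induction m with
  | zero => simp [Matrix.one_apply]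
  | succ m ih =>
    rw [pow_succ', Matrix.mul_apply]
    have h1 : 0 < M (c (m + 1)) (c m) * (M ^ m) (c m) (c 0) :=
      mul_pos (hc m (Nat.lt_succ_self m)) (ih fun l hl => hc l (hl.trans (Nat.lt_succ_self m)))
    exact Finset.sum_pos'
      (fun k _ => mul_nonneg (hM _ _) (pow_entry_nonneg hM _ _ _))
      ⟨c m, Finset.mem_univ _, h1⟩

lemma exp_mulVec_of_kernel {M : Matrix (Fin N) (Fin N) ℝ} {v : Fin N → ℝ}
    (hv : M.mulVec v = 0) : (exp M).mulVec v = v := by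
  letI : SeminormedRing (Matrix (Fin N) (Fin N) ℝ) := Matrix.linftyOpSemiNormedRing
  letI : NormedRing (Matrix (Fin N) (Fin N) ℝ) := Matrix.linftyOpNormedRing
  letI : NormedAlgebra ℝ (Matrix (Fin N) (Fin N) ℝ) := Matrix.linftyOpNormedAlgebra
  have hs : Summable fun n : ℕ => ((n.factorial : ℝ))⁻¹ • M ^ n := expSeries_summable' M
  have hcont : Continuous fun P : Matrix (Fin N) (Fin N) ℝ => P.mulVec v := by
    apply continuous_pi
    intro a
    simp only [Matrix.mulVec, dotProduct]
    exact continuous_finset_sum _ fun k _ =>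
      (continuous_apply_apply a k).mul continuous_const
  have hmap := hs.hasSum.map
    (AddMonoidHom.mk' (fun P : Matrix (Fin N) (Fin N) ℝ => P.mulVec v)
      (fun P Q => Matrix.add_mulVec P Q v))
    hcont
  have he : exp M = ∑' n : ℕ, ((n.factorial : ℝ))⁻¹ • M ^ n := by rw [exp_eq_tsum ℝ]
  have h2 : (∑' n : ℕ, ((n.factorial : ℝ))⁻¹ • M ^ n).mulVec v
      = ∑' n : ℕ, (((n.factorial : ℝ))⁻¹ • M ^ n).mulVec v := hmap.tsum_eq.symm
  have hz : ∀ n : ℕ, n ≠ 0 → (((n.factorial : ℝ))⁻¹ • M ^ n).mulVec v = 0 := by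
    intro n hn
    obtain ⟨k, rfl⟩ := Nat.exists_eq_succ_of_ne_zero hn
    rw [Matrix.smul_mulVec, pow_succ, ← Matrix.mulVec_mulVec, hv, Matrix.mulVec_zero,
      smul_zero]
  rw [he, h2, tsum_eq_single 0 hz]
  simp [Matrix.smul_mulVec]

lemma exp_add_smul_one (C : Matrix (Fin N) (Fin N) ℝ) (r : ℝ) :
    exp (C + r • (1 : Matrix (Fin N) (Fin N) ℝ)) = Real.exp r • exp C := by
  letI : SeminormedRing (Matrix (Fin N) (Fin N) ℝ) := Matrix.linftyOpSemiNormedRing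
  letI : NormedRing (Matrix (Fin N) (Fin N) ℝ) := Matrix.linftyOpNormedRing
  letI : NormedAlgebra ℝ (Matrix (Fin N) (Fin N) ℝ) := Matrix.linftyOpNormedAlgebra
  have h1 : exp (C + r • (1 : Matrix (Fin N) (Fin N) ℝ))
      = exp C * exp (r • (1 : Matrix (Fin N) (Fin N) ℝ)) :=
    Matrix.exp_add_of_commute C (r • 1) ((Commute.one_right C).smul_right r)
  have h2 : exp (r • (1 : Matrix (Fin N) (Fin N) ℝ)) = Real.exp r • 1 := by
    have halg : (r • (1 : Matrix (Fin N) (Fin N) ℝ))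
        = algebraMap ℝ (Matrix (Fin N) (Fin N) ℝ) r := (Algebra.algebraMap_eq_smul_one r).symm
    rw [halg]
    have := map_exp (algebraMap ℝ (Matrix (Fin N) (Fin N) ℝ)) (continuous_algebraMap ℝ _) r
    rw [← Real.exp_eq_exp_ℝ, Algebra.algebraMap_eq_smul_one] at this
    rw [Algebra.algebraMap_eq_smul_one] at this ⊢
    exact this.symm
  rw [h1, h2, mul_smul_comm, mul_one]

end OsmosisAux

open Filter Matrix OsmosisAux

open NormedSpace in
/-- For an irreducible `N × N` real matrix `A` with nonnegative off-diagonal entries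
and zero column sums, and a strictly positive initial vector `f`, the semi-discrete
osmosis solution `exp(tA) f` converges as `t → ∞` to the unique kernel vector `w` of
`A` with `∑ i, w i = ∑ i, f i`, and this `w` has strictly positive entries. -/
theorem osmosis_exp_tendsto_steady_state (N : ℕ) (A : Matrix (Fin N) (Fin N) ℝ)
    (hoff : ∀ i j, i ≠ j → 0 ≤ A i j) (hsum : ∀ j, ∑ i, A i j = 0)
    (hirr : MatrixIrreducible A) (f : Fin N → ℝ) (hf : ∀ i, 0 < f i) :
    ∃ w : Fin N → ℝ, A.mulVec w = 0 ∧ (∑ i, w i = ∑ i, f i) ∧ (∀ i, 0 < w i) ∧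
      (∀ w' : Fin N → ℝ, A.mulVec w' = 0 → (∑ i, w' i = ∑ i, f i) → w' = w) ∧
      Filter.Tendsto (fun t : ℝ => (exp (t • A)).mulVec f) Filter.atTop (nhds w) := by
  classical
  rcases Nat.eq_zero_or_pos N with hN0 | hNpos
  · subst hN0
    refine ⟨f, funext fun i => i.elim0, rfl, fun i => i.elim0,
      fun w' _ _ => funext fun i => i.elim0, ?_⟩
    have : (fun t : ℝ => (exp (t • A)).mulVec f) = fun _ => f := by
      funext t; funext i; exact i.elim0
    rw [this]
    exact tendsto_const_nhds
  haveI : Nonempty (Fin N) := ⟨⟨0, hNpos⟩⟩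
  -- the shifted matrix B
  set cc : ℝ := 1 + ∑ i, |A i i| with hcc
  set B : Matrix (Fin N) (Fin N) ℝ := A + cc • (1 : Matrix (Fin N) (Fin N) ℝ) with hB
  have hccpos : ∀ x, 0 < A x x + cc := by
    intro x
    have h1 : |A x x| ≤ ∑ i, |A i i| :=
      Finset.single_le_sum (fun i _ => abs_nonneg (A i i)) (Finset.mem_univ x)
    have h2 := neg_abs_le (A x x)
    rw [hcc]; linarith
  have hBapp : ∀ a b, B a b = A a b + cc * (if a = b then 1 else 0) := by
    intro a b
    rw [hB]
    simp [Matrix.add_apply, Matrix.smul_apply, Matrix.one_apply, smul_eq_mul]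
  have hBnn : ∀ a b, 0 ≤ B a b := by
    intro a b
    rw [hBapp]
    by_cases h : a = b
    · subst h; simpa using (hccpos a).le
    · simp only [if_neg h, mul_zero, add_zero]; exact hoff a b h
  have hBpos : ∀ a b, A a b ≠ 0 → 0 < B a b := by
    intro a b hab
    rw [hBapp]
    by_cases h : a = b
    · subst h; simpa using hccpos a
    · simp only [if_neg h, mul_zero, add_zero]
      exact lt_of_le_of_ne (hoff a b h) (Ne.symm hab)
  have hBdiag : ∀ x, 0 < B x x := by
    intro x; rw [hBapp]; simpa using hccpos x
  -- scaling identity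
  have hexp : ∀ t : ℝ, exp (t • A) = Real.exp (-(t * cc)) • exp (t • B) := by
    intro t
    have h1 : t • A = t • B + (-(t * cc)) • (1 : Matrix (Fin N) (Fin N) ℝ) := by
      rw [hB, smul_add, smul_smul, neg_smul, add_assoc]
      simp
    rw [h1, exp_add_smul_one]
  have htBnn : ∀ t : ℝ, 0 ≤ t → ∀ a b, 0 ≤ (t • B) a b := by
    intro t ht a b
    rw [Matrix.smul_apply, smul_eq_mul]
    exact mul_nonneg ht (hBnn a b)
  -- basic properties of Q t = exp (t • A)
  have hQnn : ∀ t : ℝ, 0 ≤ t → ∀ j i, 0 ≤ exp (t • A) j i := by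
    intro t ht j i
    rw [hexp, Matrix.smul_apply, smul_eq_mul]
    exact mul_nonneg (Real.exp_nonneg _) (exp_entry_nonneg (htBnn t ht) j i)
  have hQcol : ∀ (t : ℝ) (i : Fin N), ∑ j, exp (t • A) j i = 1 := by
    intro t i
    have h1 : ((t • A)ᵀ).mulVec (fun _ => (1 : ℝ)) = 0 := by
      funext a
      simp only [Matrix.mulVec, dotProduct, Matrix.transpose_apply, Matrix.smul_apply,
        smul_eq_mul, mul_one, Pi.zero_apply]
      rw [← Finset.mul_sum, hsum a, mul_zero]
    have h2 := exp_mulVec_of_kernel h1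
    rw [Matrix.exp_transpose] at h2
    have h3 := congrFun h2 i
    simpa [Matrix.mulVec, dotProduct, Matrix.transpose_apply] using h3
  have hQmul : ∀ t s : ℝ, exp ((t + s) • A) = exp (t • A) * exp (s • A) := by
    intro t s
    rw [add_smul]
    exact Matrix.exp_add_of_commute _ _ (((Commute.refl A).smul_left t).smul_right s)
  -- strict positivity of exp A
  have hQ1pos : ∀ j i, 0 < exp ((1 : ℝ) • A) j i := by
    intro j i
    rw [hexp, Matrix.smul_apply, smul_eq_mul, one_smul]
    refine mul_pos (Real.exp_pos _) ?_
    have hBnn' : ∀ a b, 0 ≤ B a b := hBnn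
    by_cases hij : i = j
    · subst hij
      have h1 : 0 < ((Nat.factorial 1 : ℝ))⁻¹ * (B ^ 1) i i := by
        rw [pow_one]
        simpa using hBdiag i
      exact h1.trans_le (le_exp_entry hBnn' 1 i i)
    · obtain ⟨m, ch, hch0, hchm, hch⟩ := hirr i j (Ne.symm (fun h => hij h.symm))
      have hpos : 0 < (B ^ m) (ch m) (ch 0) :=
        pow_chain_pos hBnn' m ch (fun l hl => hBpos _ _ (hch l hl))
      rw [hch0, hchm] at hpos
      have h1 : 0 < ((Nat.factorial m : ℝ))⁻¹ * (B ^ m) j i :=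
        mul_pos (inv_pos.2 (by exact_mod_cast Nat.factorial_pos m)) hpos
      exact h1.trans_le (le_exp_entry hBnn' m j i)
  -- uniform lower bound δ
  set δ : ℝ := Finset.univ.inf' Finset.univ_nonempty
      (fun p : Fin N × Fin N => exp ((1 : ℝ) • A) p.1 p.2) with hδdef
  have hδle : ∀ j i, δ ≤ exp ((1 : ℝ) • A) j i := fun j i =>
    Finset.inf'_le _ (Finset.mem_univ (j, i))
  have hδpos : 0 < δ := by
    rw [hδdef, Finset.lt_inf'_iff]
    exact fun p _ => hQ1pos p.1 p.2
  have hQδ : ∀ t : ℝ, 1 ≤ t → ∀ j i, δ ≤ exp (t • A) j i := by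
    intro t ht j i
    have h1 : exp (t • A) = exp ((1 : ℝ) • A) * exp ((t - 1) • A) := by
      rw [← hQmul]; norm_num
    rw [h1, Matrix.mul_apply]
    calc δ = δ * ∑ k, exp ((t - 1) • A) k i := by rw [hQcol, mul_one]
    _ = ∑ k, δ * exp ((t - 1) • A) k i := by rw [Finset.mul_sum]
    _ ≤ ∑ k, exp ((1 : ℝ) • A) j k * exp ((t - 1) • A) k i :=
        Finset.sum_le_sum fun k _ => mul_le_mul_of_nonneg_right (hδle j k)
          (hQnn (t - 1) (by linarith) k i)
  -- max and min over rows
  set Mx : Fin N → ℝ → ℝ := fun j t => Finset.univ.sup' Finset.univ_nonempty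
      (fun a => exp (t • A) j a) with hMxdef
  set mn : Fin N → ℝ → ℝ := fun j t => Finset.univ.inf' Finset.univ_nonempty
      (fun a => exp (t • A) j a) with hmndef
  have hleM : ∀ j t a, exp (t • A) j a ≤ Mx j t := fun j t a =>
    Finset.le_sup' _ (Finset.mem_univ a)
  have hmle : ∀ j t a, mn j t ≤ exp (t • A) j a := fun j t a =>
    Finset.inf'_le _ (Finset.mem_univ a)
  have hmM : ∀ j t, mn j t ≤ Mx j t := fun j t =>
    (hmle j t (Classical.arbitrary _)).trans (hleM j t (Classical.arbitrary _))
  have hentry : ∀ (t s : ℝ) (j a : Fin N),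
      exp ((t + s) • A) j a = ∑ k, exp (t • A) j k * exp (s • A) k a := by
    intro t s j a
    rw [hQmul, Matrix.mul_apply]
  have hMdec : ∀ j (t s : ℝ), 0 ≤ s → Mx j (t + s) ≤ Mx j t := by
    intro j t s hs
    apply Finset.sup'_le
    intro a _
    rw [hentry]
    calc ∑ k, exp (t • A) j k * exp (s • A) k a
        ≤ ∑ k, Mx j t * exp (s • A) k a :=
          Finset.sum_le_sum fun k _ => mul_le_mul_of_nonneg_right (hleM j t k) (hQnn s hs k a)
    _ = Mx j t := by rw [← Finset.mul_sum, hQcol, mul_one]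
  have hminc : ∀ j (t s : ℝ), 0 ≤ s → mn j t ≤ mn j (t + s) := by
    intro j t s hs
    apply Finset.le_inf'
    intro a _
    rw [hentry]
    calc mn j t = ∑ k, mn j t * exp (s • A) k a := by rw [← Finset.mul_sum, hQcol, mul_one]
    _ ≤ ∑ k, exp (t • A) j k * exp (s • A) k a :=
          Finset.sum_le_sum fun k _ => mul_le_mul_of_nonneg_right (hmle j t k) (hQnn s hs k a)
  have hM_mono : ∀ j (t s : ℝ), t ≤ s → Mx j s ≤ Mx j t := by
    intro j t s hts
    have := hMdec j t (s - t) (by linarith)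
    rwa [add_sub_cancel] at this
  have hm_mono : ∀ j (t s : ℝ), t ≤ s → mn j t ≤ mn j s := by
    intro j t s hts
    have := hminc j t (s - t) (by linarith)
    rwa [add_sub_cancel] at this
  -- contraction step
  have hcontr : ∀ j (t : ℝ), Mx j (t + 1) - mn j (t + 1) ≤ (1 - 2 * δ) * (Mx j t - mn j t) := by
    intro j t
    obtain ⟨k₀, -, hk₀⟩ := Finset.exists_mem_eq_inf' (Finset.univ_nonempty)
      (fun k => exp (t • A) j k)
    obtain ⟨k₁, -, hk₁⟩ := Finset.exists_mem_eq_sup' (Finset.univ_nonempty)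
      (fun k => exp (t • A) j k)
    have hup : ∀ a, exp ((t + 1) • A) j a ≤ Mx j t - δ * (Mx j t - mn j t) := by
      intro a
      rw [hentry]
      have hw : ∑ k, exp ((1 : ℝ) • A) k a = 1 := hQcol 1 a
      have h1 : ∑ k, exp (t • A) j k * exp ((1 : ℝ) • A) k a
          = (∑ k, (exp (t • A) j k - Mx j t) * exp ((1 : ℝ) • A) k a) + Mx j t := by
        simp only [sub_mul]
        rw [Finset.sum_sub_distrib, ← Finset.mul_sum, hw, mul_one]
        ring
      have h2 : ∑ k, (exp (t • A) j k - Mx j t) * exp ((1 : ℝ) • A) k a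
          ≤ (exp (t • A) j k₀ - Mx j t) * exp ((1 : ℝ) • A) k₀ a := by
        rw [← Finset.add_sum_erase _ _ (Finset.mem_univ k₀)]
        have h3 : ∑ k ∈ Finset.univ.erase k₀,
            (exp (t • A) j k - Mx j t) * exp ((1 : ℝ) • A) k a ≤ 0 :=
          Finset.sum_nonpos fun k _ => mul_nonpos_iff.2
            (Or.inr ⟨sub_nonpos.2 (hleM j t k), hQnn 1 zero_le_one k a⟩)
        linarith
      have h4 : (exp (t • A) j k₀ - Mx j t) * exp ((1 : ℝ) • A) k₀ a
          ≤ (mn j t - Mx j t) * δ := by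
        rw [← hk₀]
        exact mul_le_mul_of_nonpos_left (hδle k₀ a) (sub_nonpos.2 (hmM j t))
      rw [h1]
      linarith
    have hlow : ∀ a, mn j t + δ * (Mx j t - mn j t) ≤ exp ((t + 1) • A) j a := by
      intro a
      rw [hentry]
      have hw : ∑ k, exp ((1 : ℝ) • A) k a = 1 := hQcol 1 a
      have h1 : ∑ k, exp (t • A) j k * exp ((1 : ℝ) • A) k a
          = (∑ k, (exp (t • A) j k - mn j t) * exp ((1 : ℝ) • A) k a) + mn j t := by
        simp only [sub_mul]
        rw [Finset.sum_sub_distrib, ← Finset.mul_sum, hw, mul_one]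
        ring
      have h2 : (exp (t • A) j k₁ - mn j t) * exp ((1 : ℝ) • A) k₁ a
          ≤ ∑ k, (exp (t • A) j k - mn j t) * exp ((1 : ℝ) • A) k a :=
        Finset.single_le_sum
          (fun k _ => mul_nonneg (sub_nonneg.2 (hmle j t k)) (hQnn 1 zero_le_one k a))
          (Finset.mem_univ k₁)
      have h4 : (Mx j t - mn j t) * δ
          ≤ (exp (t • A) j k₁ - mn j t) * exp ((1 : ℝ) • A) k₁ a := by
        rw [← hk₁]
        exact mul_le_mul_of_nonneg_left (hδle k₁ a) (sub_nonneg.2 (hmM j t))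
      rw [h1]
      linarith
    have h5 : Mx j (t + 1) ≤ Mx j t - δ * (Mx j t - mn j t) := Finset.sup'_le _ _ fun a _ => hup a
    have h6 : mn j t + δ * (Mx j t - mn j t) ≤ mn j (t + 1) := Finset.le_inf' _ _ fun a _ => hlow a
    linarith
  -- geometric decay of oscillation
  set θ : ℝ := max (1 - 2 * δ) 0 with hθdef
  have hθ0 : 0 ≤ θ := le_max_right _ _
  have hθ1 : θ < 1 := max_lt (by linarith) one_pos
  have hosc : ∀ j (n : ℕ), Mx j n - mn j n ≤ θ ^ n * (Mx j 0 - mn j 0) := by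
    intro j n
    induction n with
    | zero => simp
    | succ n ih =>
      have h1 : Mx j ((n : ℝ) + 1) - mn j ((n : ℝ) + 1) ≤ (1 - 2 * δ) * (Mx j n - mn j n) :=
        hcontr j n
      have h2 : (1 - 2 * δ) * (Mx j n - mn j n) ≤ θ * (Mx j n - mn j n) :=
        mul_le_mul_of_nonneg_right (le_max_left _ _) (by linarith [hmM j (n : ℝ)])
      have h3 : θ * (Mx j n - mn j n) ≤ θ * (θ ^ n * (Mx j 0 - mn j 0)) :=
        mul_le_mul_of_nonneg_left ih hθ0
      have h4 : ((n + 1 : ℕ) : ℝ) = (n : ℝ) + 1 := by push_cast; ring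
      rw [h4]
      calc Mx j ((n : ℝ) + 1) - mn j ((n : ℝ) + 1) ≤ θ * (θ ^ n * (Mx j 0 - mn j 0)) := by
            linarith
      _ = θ ^ (n + 1) * (Mx j 0 - mn j 0) := by ring
  -- the limit vector L
  have hbdd : ∀ j, BddAbove (Set.range fun n : ℕ => mn j n) := by
    intro j
    refine ⟨Mx j 0, ?_⟩
    rintro x ⟨n, rfl⟩
    exact (hmM j n).trans (hM_mono j 0 n (Nat.cast_nonneg n))
  set L : Fin N → ℝ := fun j => ⨆ n : ℕ, mn j n with hLdef
  have hLge : ∀ j (n : ℕ), mn j n ≤ L j := fun j n => le_ciSup (hbdd j) n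
  have hLleM : ∀ j (n : ℕ), L j ≤ Mx j n := by
    intro j n
    apply ciSup_le
    intro k
    rcases le_total k n with h | h
    · exact (hm_mono j k n (by exact_mod_cast h)).trans (hmM j n)
    · exact (hmM j k).trans (hM_mono j n k (by exact_mod_cast h))
  -- entrywise convergence
  have hlim : ∀ j a, Tendsto (fun t : ℝ => exp (t • A) j a) atTop (nhds (L j)) := by
    intro j a
    rw [Metric.tendsto_atTop]
    intro ε hε
    have h0 : Tendsto (fun n : ℕ => θ ^ n * (Mx j 0 - mn j 0)) atTop (nhds 0) := by
      simpa using (tendsto_pow_atTop_nhds_zero_of_lt_one hθ0 hθ1).mul_const (Mx j 0 - mn j 0)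
    obtain ⟨n, hn⟩ := (h0.eventually (gt_mem_nhds hε)).exists
    refine ⟨n, fun t ht => ?_⟩
    have h1 : mn j n ≤ exp (t • A) j a := (hm_mono j n t ht).trans (hmle j t a)
    have h2 : exp (t • A) j a ≤ Mx j n := (hleM j t a).trans (hM_mono j n t ht)
    have h3 := hLge j n
    have h4 := hLleM j n
    have h5 := hosc j n
    rw [Real.dist_eq, abs_sub_lt_iff]
    constructor <;> linarith [hn]
  -- convergence of solutions with arbitrary initial data
  have hmv : ∀ (t : ℝ) (g : Fin N → ℝ) (j : Fin N),
      (exp (t • A)).mulVec g j = ∑ a, exp (t • A) j a * g a := by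
    intro t g j
    simp [Matrix.mulVec, dotProduct]
  have hgenc : ∀ (g : Fin N → ℝ) (j : Fin N),
      Tendsto (fun t : ℝ => (exp (t • A)).mulVec g j) atTop (nhds (L j * ∑ a, g a)) := by
    intro g j
    have h1 := tendsto_finset_sum (Finset.univ : Finset (Fin N))
      (fun a _ => (hlim j a).mul_const (g a))
    have h2 : ∑ a, L j * g a = L j * ∑ a, g a := by rw [Finset.mul_sum]
    rw [← h2]
    simpa only [hmv] using h1
  have hgen : ∀ g : Fin N → ℝ,
      Tendsto (fun t : ℝ => (exp (t • A)).mulVec g) atTop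
        (nhds (fun j => L j * ∑ a, g a)) := by
    intro g
    rw [tendsto_pi_nhds]
    exact fun j => hgenc g j
  -- kernel vectors are fixed and equal to multiples of L
  have hfix : ∀ (v : Fin N → ℝ), A.mulVec v = 0 → ∀ t : ℝ, (exp (t • A)).mulVec v = v := by
    intro v hv t
    exact exp_mulVec_of_kernel (by rw [Matrix.smul_mulVec, hv, smul_zero])
  have hker : ∀ v : Fin N → ℝ, A.mulVec v = 0 → v = fun j => L j * ∑ a, v a := by
    intro v hv
    have h1 : Tendsto (fun t : ℝ => (exp (t • A)).mulVec v) atTop (nhds v) := by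
      have : (fun t : ℝ => (exp (t • A)).mulVec v) = fun _ => v := funext fun t => hfix v hv t
      rw [this]
      exact tendsto_const_nhds
    exact tendsto_nhds_unique h1 (hgen v)
  -- a nonzero kernel vector exists
  have hdet : A.det = 0 := by
    rw [← Matrix.det_transpose]
    apply Matrix.exists_mulVec_eq_zero_iff.1
    refine ⟨fun _ => (1 : ℝ), ?_, ?_⟩
    · intro h
      exact one_ne_zero (congrFun h ⟨0, hNpos⟩)
    · funext a
      simp only [Matrix.mulVec, dotProduct, Matrix.transpose_apply, mul_one,
        Pi.zero_apply]
      exact hsum a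
  obtain ⟨w₀, hw₀ne, hw₀⟩ := Matrix.exists_mulVec_eq_zero_iff.2 hdet
  have h0 := hker w₀ hw₀
  have hs₀ : ∑ a, w₀ a ≠ 0 := by
    intro h
    apply hw₀ne
    funext j
    rw [congrFun h0 j, h, mul_zero]
    rfl
  -- L is in the kernel of A
  have hLsmul : L = (∑ a, w₀ a)⁻¹ • w₀ := by
    funext j
    rw [Pi.smul_apply, smul_eq_mul, congrFun h0 j]
    field_simp
  have hLker : A.mulVec L = 0 := by
    rw [hLsmul, Matrix.mulVec_smul, hw₀, smul_zero]
  -- sum of L is 1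
  have hsumL : ∑ j, L j = 1 := by
    have i₀ : Fin N := ⟨0, hNpos⟩
    have h1 : Tendsto (fun t : ℝ => ∑ j, exp (t • A) j i₀) atTop (nhds (∑ j, L j)) :=
      tendsto_finset_sum _ fun j _ => hlim j i₀
    have h2 : (fun t : ℝ => ∑ j, exp (t • A) j i₀) = fun _ => (1 : ℝ) :=
      funext fun t => hQcol t i₀
    rw [h2] at h1
    exact tendsto_nhds_unique h1 tendsto_const_nhds
  -- the steady state
  refine ⟨fun j => L j * ∑ a, f a, ?_, ?_, ?_, ?_, ?_⟩
  · have : (fun j => L j * ∑ a, f a) = (∑ a, f a) • L := by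
      funext j
      rw [Pi.smul_apply, smul_eq_mul, mul_comm]
    rw [this, Matrix.mulVec_smul, hLker, smul_zero]
  · rw [← Finset.sum_mul, hsumL, one_mul]
  · intro j
    have hsf : 0 < ∑ a, f a := Finset.sum_pos (fun a _ => hf a) Finset.univ_nonempty
    have h1 : Tendsto (fun t : ℝ => (exp (t • A)).mulVec f j) atTop
        (nhds (L j * ∑ a, f a)) := hgenc f j
    have h2 : ∀ᶠ t : ℝ in atTop, δ * ∑ a, f a ≤ (exp (t • A)).mulVec f j := by
      filter_upwards [eventually_ge_atTop (1 : ℝ)] with t ht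
      rw [hmv, Finset.mul_sum]
      exact Finset.sum_le_sum fun a _ =>
        mul_le_mul_of_nonneg_right (hQδ t ht j a) (hf a).le
    have h3 : δ * ∑ a, f a ≤ L j * ∑ a, f a := ge_of_tendsto h1 h2
    exact lt_of_lt_of_le (mul_pos hδpos hsf) h3
  · intro w' h1 h2
    rw [hker w' h1]
    funext j
    rw [h2]
  · exact hgen f
end

section
/- Let A be an N×N real matrix with nonnegative off-diagonal entries, zero column sums, and irreducible (for every pair of indices i ≠ j there is a finite sequence i = i₀, i₁, …, i_m = j with A_{i_{l+1} i_l} ≠ 0 for all l). Then for every t > 0, every entry of exp(tA) is strictly positive. Consequently, if f ∈ ℝ^N is nonnegative and nonzero, then u(t) = exp(tA) f has strictly positive entries for every t > 0. -/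
open NormedSpace

section AuxLemmas

attribute [local instance] Matrix.linftyOpNormedAddCommGroup Matrix.linftyOpNormedRing
  Matrix.linftyOpNormedAlgebra

lemma pow_entry_nonneg {N : ℕ} {B : Matrix (Fin N) (Fin N) ℝ}
    (hB : ∀ i j, 0 ≤ B i j) (n : ℕ) : ∀ i j, 0 ≤ (B ^ n) i j := by
  induction n with
  | zero => intro i j; rw [pow_zero, Matrix.one_apply]; positivity
  | succ n ih =>
      intro i j
      rw [pow_succ, Matrix.mul_apply]
      exact Finset.sum_nonneg fun k _ => mul_nonneg (ih i k) (hB k j)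

lemma exp_entry_hasSum {N : ℕ} (B : Matrix (Fin N) (Fin N) ℝ) (i j : Fin N) :
    HasSum (fun n : ℕ => ((n.factorial : ℝ))⁻¹ * (B ^ n) i j) (exp B i j) := by
  have h : HasSum (fun n : ℕ => ((n.factorial : ℝ))⁻¹ • B ^ n) (exp B) := by
    rw [exp_eq_tsum ℝ]
    exact (expSeries_summable' (𝕂 := ℝ) B).hasSum
  have h2 : ∀ a : Fin N, HasSum (fun n : ℕ => ((n.factorial : ℝ))⁻¹ • (B ^ n) a) (exp B a) :=
    Pi.hasSum.mp h
  simpa using Pi.hasSum.mp (h2 i) j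

/-- Main lemma: off-diagonal nonneg + irreducible implies exp has positive entries. -/
lemma exp_pos_of_irreducible {N : ℕ} (M : Matrix (Fin N) (Fin N) ℝ)
    (hoff : ∀ i j, i ≠ j → 0 ≤ M i j) (hirr : MatrixIrreducible M) :
    ∀ i j, 0 < exp M i j := by
  set c : ℝ := 1 + ∑ k, |M k k| with hc
  set B : Matrix (Fin N) (Fin N) ℝ := M + c • 1 with hBdef
  have habs : ∀ k : Fin N, |M k k| ≤ ∑ k, |M k k| := fun k =>
    Finset.single_le_sum (f := fun k => |M k k|) (fun _ _ => abs_nonneg _) (Finset.mem_univ k)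
  have hBdiag : ∀ k, 0 < B k k := by
    intro k
    have : B k k = M k k + c := by
      simp [hBdef, Matrix.add_apply, Matrix.smul_apply, Matrix.one_apply]
    rw [this, hc]
    have := habs k
    have := neg_abs_le (M k k)
    linarith
  have hBnn : ∀ i j, 0 ≤ B i j := by
    intro i j
    rcases eq_or_ne i j with rfl | hij
    · exact (hBdiag i).le
    · have : B i j = M i j := by
        simp [hBdef, Matrix.add_apply, Matrix.smul_apply, Matrix.one_apply_ne hij]
      rw [this]; exact hoff i j hij
  -- positivity of some power entry
  have hpow : ∀ i j : Fin N, ∃ m : ℕ, 0 < (B ^ m) i j := by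
    intro i j
    rcases eq_or_ne j i with rfl | hij
    · exact ⟨0, by simp [Matrix.one_apply]⟩
    · obtain ⟨m, ch, hc0, hcm, hch⟩ := hirr j i hij
      -- show B (ch (l+1)) (ch l) > 0 for l < m
      have hstep : ∀ l < m, 0 < B (ch (l + 1)) (ch l) := by
        intro l hl
        rcases eq_or_ne (ch (l + 1)) (ch l) with he | hne
        · rw [he]; exact hBdiag _
        · have hppos := hoff _ _ hne
          have hMne := hch l hl
          have : B (ch (l + 1)) (ch l) = M (ch (l + 1)) (ch l) := by
            simp [hBdef, Matrix.add_apply, Matrix.smul_apply, Matrix.one_apply_ne hne]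
          rw [this]
          exact lt_of_le_of_ne hppos (Ne.symm hMne)
      have key : ∀ l ≤ m, 0 < (B ^ l) (ch l) j := by
        intro l hl
        induction l with
        | zero => simp [hc0, Matrix.one_apply]
        | succ l ih =>
            have hl' : l ≤ m := Nat.le_of_succ_le hl
            rw [pow_succ', Matrix.mul_apply]
            apply Finset.sum_pos' (fun k _ => mul_nonneg (hBnn _ _) (pow_entry_nonneg hBnn l k j))
            exact ⟨ch l, Finset.mem_univ _,
              mul_pos (hstep l (Nat.lt_of_succ_le hl)) (ih hl')⟩
      exact ⟨m, hcm ▸ key m le_rfl⟩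
  -- exp B has positive entries
  have hexpB : ∀ i j, 0 < exp B i j := by
    intro i j
    obtain ⟨m, hm⟩ := hpow i j
    have hs := exp_entry_hasSum B i j
    have hle : ((m.factorial : ℝ))⁻¹ * (B ^ m) i j ≤ exp B i j :=
      le_hasSum hs m fun n _ => mul_nonneg (by positivity) (pow_entry_nonneg hBnn n i j)
    have : (0:ℝ) < ((m.factorial : ℝ))⁻¹ * (B ^ m) i j := by
      apply mul_pos _ hm
      have := m.factorial_pos
      positivity
    linarith
  -- relate exp M and exp B
  have hcsmul : (c • (1 : Matrix (Fin N) (Fin N) ℝ)) = Matrix.diagonal (fun _ => c) := by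
    rw [Matrix.smul_one_eq_diagonal]
  have hcomm : Commute M (c • (1 : Matrix (Fin N) (Fin N) ℝ)) :=
    (Commute.one_right M).smul_right c
  have hexpadd : exp B = exp M * exp (c • (1 : Matrix (Fin N) (Fin N) ℝ)) :=
    Matrix.exp_add_of_commute M (c • 1) hcomm
  have hexpc : exp (c • (1 : Matrix (Fin N) (Fin N) ℝ))
      = Matrix.diagonal (fun _ => Real.exp c) := by
    rw [hcsmul, Matrix.exp_diagonal]
    have hfun : (exp (fun _ : Fin N => c)) = fun _ : Fin N => Real.exp c := by
      funext k
      rw [Pi.coe_exp, Real.exp_eq_exp_ℝ]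
    rw [hfun]
  intro i j
  have h1 : exp B i j = exp M i j * Real.exp c := by
    rw [hexpadd, hexpc, Matrix.mul_diagonal]
  have h2 := hexpB i j
  rw [h1] at h2
  rcases mul_pos_iff.mp h2 with ⟨h, _⟩ | ⟨_, h⟩
  · exact h
  · exact absurd h (not_lt.mpr (Real.exp_pos c).le)

end AuxLemmas

open NormedSpace in
/-- For an irreducible `N × N` real matrix `A` with nonnegative off-diagonal entries
and zero column sums, every entry of `exp(tA)` is strictly positive for every
`t > 0`; consequently, if `f` is nonnegative and nonzero, then `exp(tA) f` has
strictly positive entries for every `t > 0`. -/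
theorem osmosis_exp_positive (N : ℕ) (A : Matrix (Fin N) (Fin N) ℝ)
    (hoff : ∀ i j, i ≠ j → 0 ≤ A i j) (hsum : ∀ j, ∑ i, A i j = 0)
    (hirr : MatrixIrreducible A) :
    ∀ t : ℝ, 0 < t →
      (∀ i j, 0 < exp (t • A) i j) ∧
      (∀ f : Fin N → ℝ, (∀ i, 0 ≤ f i) → f ≠ 0 →
        ∀ i, 0 < (exp (t • A)).mulVec f i) := by
  intro t ht
  have hoff' : ∀ i j, i ≠ j → 0 ≤ (t • A) i j := fun i j hij => by
    simpa using mul_nonneg ht.le (hoff i j hij)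
  have hirr' : MatrixIrreducible (t • A) := by
    intro i j hij
    obtain ⟨m, ch, h0, hm, hch⟩ := hirr i j hij
    exact ⟨m, ch, h0, hm, fun l hl => by
      simp only [Matrix.smul_apply, smul_eq_mul]
      exact mul_ne_zero ht.ne' (hch l hl)⟩
  have hpos := exp_pos_of_irreducible (t • A) hoff' hirr'
  refine ⟨hpos, ?_⟩
  intro f hf hf0 i
  obtain ⟨j, hj⟩ := Function.ne_iff.mp hf0
  have hjpos : 0 < f j := lt_of_le_of_ne (hf j) (Ne.symm hj)
  rw [Matrix.mulVec, dotProduct]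
  apply Finset.sum_pos' (fun k _ => mul_nonneg (hpos i k).le (hf k))
  exact ⟨j, Finset.mem_univ _, mul_pos (hpos i j) hjpos⟩
end

section
/- Let A be an N×N real matrix with nonnegative off-diagonal entries, zero column sums, and irreducible (for every pair i ≠ j there is a sequence i = i₀, …, i_m = j with A_{i_{l+1} i_l} ≠ 0), and let τ > 0. Let f ∈ ℝ^N have strictly positive entries. Then the implicit Euler iterates u^k = (I − τA)^{-k} f converge, as k → ∞, to the unique vector w in the kernel of A with ∑_i w_i = ∑_i f_i. -/
open Matrix Finset Filter Topology

namespace Matrix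

variable {n : Type*} [Fintype n]

theorem norm_le_sum_abs (x : n → ℝ) : ‖x‖ ≤ ∑ i, |x i| :=
  (pi_norm_le_iff_of_nonneg (sum_nonneg fun _ _ => abs_nonneg _)).mpr fun i =>
    single_le_sum (f := fun i => |x i|) (fun _ _ => abs_nonneg _) (mem_univ i)

section ColStochastic

variable {B : Matrix n n ℝ} {θ : ℝ}

theorem eq_of_mulVec_eq_self (hθ₁ : θ < 1)
    (hθ : ∀ x : n → ℝ, ∑ i, x i = 0 → ∑ i, |(B *ᵥ x) i| ≤ θ * ∑ i, |x i|)
    {w w' : n → ℝ} (hw : B *ᵥ w = w) (hw' : B *ᵥ w' = w') (hsum : ∑ i, w i = ∑ i, w' i) :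
    w = w' := by
  have hfix : B *ᵥ (w - w') = w - w' := by rw [mulVec_sub, hw, hw']
  have hcontr := hθ (w - w') (by simp only [Pi.sub_apply, sum_sub_distrib, hsum, sub_self])
  rw [hfix] at hcontr
  have hzero : ∑ i, |(w - w') i| = 0 :=
    le_antisymm (by nlinarith) (sum_nonneg fun i _ => abs_nonneg _)
  rw [sum_eq_zero_iff_of_nonneg fun i _ => abs_nonneg _] at hzero
  exact sub_eq_zero.mp (funext fun i => abs_eq_zero.mp (hzero i (mem_univ i)))

variable [DecidableEq n]

theorem sum_abs_mulVec_le_of_le_apply (hB : B ∈ colStochastic ℝ n) {ε : ℝ}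
    (hε : ∀ i j, ε ≤ B i j) {x : n → ℝ} (hx : ∑ i, x i = 0) :
    ∑ i, |(B *ᵥ x) i| ≤ (1 - Fintype.card n * ε) * ∑ i, |x i| := by
  -- as `∑ x = 0`, subtracting `ε` from every entry of `B` leaves `B *ᵥ x` unchanged
  -- and makes the entries nonnegative
  have hshift : ∀ i, (B *ᵥ x) i = ∑ j, (B i j - ε) * x j := by
    intro i
    simp only [mulVec, dotProduct, sub_mul, sum_sub_distrib, ← mul_sum, hx, mul_zero, sub_zero]
  calc ∑ i, |(B *ᵥ x) i| ≤ ∑ i, ∑ j, (B i j - ε) * |x j| := by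
        refine sum_le_sum fun i _ => ?_
        rw [hshift]
        refine (abs_sum_le_sum_abs _ _).trans_eq (sum_congr rfl fun j _ => ?_)
        rw [abs_mul, abs_of_nonneg (sub_nonneg.mpr (hε i j))]
    _ = ∑ j, (∑ i, (B i j - ε)) * |x j| := by
        rw [sum_comm]
        simp only [sum_mul]
    _ = (1 - Fintype.card n * ε) * ∑ j, |x j| := by
        simp only [sum_sub_distrib, sum_col_of_mem_colStochastic hB, sum_const, card_univ,
          nsmul_eq_mul, mul_sum]

theorem exists_sum_abs_mulVec_le_of_pos [Nonempty n] (hB : B ∈ colStochastic ℝ n)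
    (hpos : ∀ i j, 0 < B i j) :
    ∃ θ, 0 ≤ θ ∧ θ < 1 ∧
      ∀ x : n → ℝ, ∑ i, x i = 0 → ∑ i, |(B *ᵥ x) i| ≤ θ * ∑ i, |x i| := by
  obtain ⟨p, hp⟩ := Finite.exists_min fun p : n × n => B p.1 p.2
  refine ⟨1 - Fintype.card n * B p.1 p.2, ?_, ?_,
    fun x => sum_abs_mulVec_le_of_le_apply hB fun i j => hp (i, j)⟩
  · have : Fintype.card n * B p.1 p.2 ≤ ∑ i, B i p.2 := by
      simpa using sum_le_sum fun i (_ : i ∈ univ) => hp (i, p.2)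
    linarith [sum_col_of_mem_colStochastic hB p.2]
  · have := mul_pos (Nat.cast_pos.mpr (Fintype.card_pos (α := n))) (hpos p.1 p.2)
    linarith

theorem sum_abs_pow_mulVec_le (hB : B ∈ colStochastic ℝ n) (hθ₀ : 0 ≤ θ)
    (hθ : ∀ x : n → ℝ, ∑ i, x i = 0 → ∑ i, |(B *ᵥ x) i| ≤ θ * ∑ i, |x i|)
    (k : ℕ) {x : n → ℝ} (hx : ∑ i, x i = 0) :
    ∑ i, |(B ^ k *ᵥ x) i| ≤ θ ^ k * ∑ i, |x i| := by
  induction k with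
  | zero => simp
  | succ k ih =>
    rw [pow_succ', ← mulVec_mulVec, pow_succ', mul_assoc]
    refine (hθ _ ?_).trans (mul_le_mul_of_nonneg_left ih hθ₀)
    rw [sum_mulVec_of_mem_colStochastic (pow_mem hB k), hx]

theorem cauchySeq_pow_mulVec (hB : B ∈ colStochastic ℝ n) (hθ₀ : 0 ≤ θ) (hθ₁ : θ < 1)
    (hθ : ∀ x : n → ℝ, ∑ i, x i = 0 → ∑ i, |(B *ᵥ x) i| ≤ θ * ∑ i, |x i|) (f : n → ℝ) :
    CauchySeq fun k : ℕ => B ^ k *ᵥ f := by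
  refine cauchySeq_of_le_geometric θ (∑ i, |(B *ᵥ f - f) i|) hθ₁ fun k => ?_
  have hstep : B ^ (k + 1) *ᵥ f - B ^ k *ᵥ f = B ^ k *ᵥ (B *ᵥ f - f) := by
    rw [mulVec_sub, mulVec_mulVec, ← pow_succ]
  have hd : ∑ i, (B *ᵥ f - f) i = 0 := by
    simp only [Pi.sub_apply, sum_sub_distrib, sum_mulVec_of_mem_colStochastic hB, sub_self]
  rw [dist_comm, dist_eq_norm, hstep, mul_comm]
  exact (norm_le_sum_abs _).trans (sum_abs_pow_mulVec_le hB hθ₀ hθ k hd)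

theorem mulVec_eq_self_of_tendsto_pow_mulVec {B : Matrix n n ℝ} {f w : n → ℝ}
    (h : Tendsto (fun k : ℕ => B ^ k *ᵥ f) atTop (𝓝 w)) : B *ᵥ w = w := by
  have hB : Tendsto (fun k : ℕ => B *ᵥ (B ^ k *ᵥ f)) atTop (𝓝 (B *ᵥ w)) :=
    ((continuous_const.matrix_mulVec continuous_id).tendsto w).comp h
  simp only [mulVec_mulVec, ← pow_succ'] at hB
  exact tendsto_nhds_unique hB (h.comp (tendsto_add_atTop_nat 1))

theorem exists_tendsto_pow_mulVec_of_pos (hB : B ∈ colStochastic ℝ n)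
    (hpos : ∀ i j, 0 < B i j) (f : n → ℝ) :
    ∃ w : n → ℝ, B *ᵥ w = w ∧ (∑ i, w i = ∑ i, f i) ∧
      (∀ w' : n → ℝ, B *ᵥ w' = w' → (∑ i, w' i = ∑ i, f i) → w' = w) ∧
      Tendsto (fun k : ℕ => B ^ k *ᵥ f) atTop (𝓝 w) := by
  cases isEmpty_or_nonempty n
  · exact ⟨f, Subsingleton.elim _ _, rfl, fun _ _ _ => Subsingleton.elim _ _,
      tendsto_const_nhds.congr fun _ => Subsingleton.elim _ _⟩
  obtain ⟨θ, hθ₀, hθ₁, hθ⟩ := exists_sum_abs_mulVec_le_of_pos hB hpos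
  obtain ⟨w, hlim⟩ := cauchySeq_tendsto_of_complete (cauchySeq_pow_mulVec hB hθ₀ hθ₁ hθ f)
  have hfix := mulVec_eq_self_of_tendsto_pow_mulVec hlim
  have hsum : ∑ i, w i = ∑ i, f i := by
    refine tendsto_nhds_unique ((continuous_finsetSum _ fun i _ => continuous_apply i).tendsto w
      |>.comp hlim) (tendsto_const_nhds.congr fun k => ?_)
    exact (sum_mulVec_of_mem_colStochastic (pow_mem hB k)).symm
  exact ⟨w, hfix, hsum, fun w' hw' hsum' => eq_of_mulVec_eq_self hθ₁ hθ hw' hfix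
    (hsum'.trans hsum.symm), hlim⟩

end ColStochastic

structure IsColRateMatrix (A : Matrix n n ℝ) : Prop where
  nonneg_of_ne : ∀ i j, i ≠ j → 0 ≤ A i j
  sum_col : ∀ j, ∑ i, A i j = 0

section RateMatrix

variable [DecidableEq n] {A : Matrix n n ℝ} {τ : ℝ}

theorem vecMul_one_sub_smul_apply (A : Matrix n n ℝ) (τ : ℝ) (y : n → ℝ) (j : n) :
    (y ᵥ* (1 - τ • A)) j = y j - τ * ∑ i, y i * A i j := by
  simp only [vecMul, dotProduct, sub_apply, one_apply, smul_apply, smul_eq_mul, mul_sub,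
    sum_sub_distrib, mul_ite, mul_one, mul_zero, sum_ite_eq', mem_univ, if_true, mul_sum,
    mul_left_comm τ]

theorem row_inv_vecMul {M : Matrix n n ℝ} (hM : IsUnit M.det) (i : n) :
    M⁻¹ i ᵥ* M = Pi.single i 1 := by
  rw [← vecMul_one (Pi.single i 1), ← nonsing_inv_mul _ hM, ← vecMul_vecMul, single_one_vecMul]
  rfl

namespace IsColRateMatrix

theorem nonneg_of_vecMul_one_sub_smul_nonneg (hA : IsColRateMatrix A) (hτ : 0 ≤ τ)
    {y : n → ℝ} (hy : ∀ j, 0 ≤ (y ᵥ* (1 - τ • A)) j) (j : n) : 0 ≤ y j := by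
  obtain ⟨j₀, -, hj₀⟩ := exists_min_image univ y ⟨j, mem_univ j⟩
  -- at a minimum of `y` the coupling term is nonnegative, so `y j₀ ≥ (y ᵥ* (1 - τ • A)) j₀ ≥ 0`
  have hcoupling : 0 ≤ ∑ i, y i * A i j₀ :=
    calc (0 : ℝ) = ∑ i, y j₀ * A i j₀ := by rw [← mul_sum, hA.sum_col, mul_zero]
      _ ≤ ∑ i, y i * A i j₀ := sum_le_sum fun i _ => by
          rcases eq_or_ne i j₀ with rfl | hij
          · rfl
          · exact mul_le_mul_of_nonneg_right (hj₀ i (mem_univ i)) (hA.nonneg_of_ne i j₀ hij)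
  have hj₀y := hy j₀
  rw [vecMul_one_sub_smul_apply] at hj₀y
  nlinarith [hj₀ j (mem_univ j)]

theorem isUnit_det_one_sub_smul (hA : IsColRateMatrix A) (hτ : 0 ≤ τ) :
    IsUnit (1 - τ • A).det := by
  refine isUnit_iff_ne_zero.mpr fun hdet => ?_
  obtain ⟨v, hv, hvM⟩ := exists_vecMul_eq_zero_iff.mpr hdet
  have hv₀ := hA.nonneg_of_vecMul_one_sub_smul_nonneg hτ (y := v) (by simp [hvM])
  have hv₁ := hA.nonneg_of_vecMul_one_sub_smul_nonneg hτ (y := -v) (by simp [neg_vecMul, hvM])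
  exact hv (funext fun i => le_antisymm (by simpa using hv₁ i) (hv₀ i))

theorem inv_one_sub_smul_mem_colStochastic (hA : IsColRateMatrix A) (hτ : 0 ≤ τ) :
    (1 - τ • A)⁻¹ ∈ colStochastic ℝ n := by
  have hdet := hA.isUnit_det_one_sub_smul hτ
  refine ⟨fun i => hA.nonneg_of_vecMul_one_sub_smul_nonneg hτ fun j => ?_, ?_⟩
  · rw [row_inv_vecMul hdet]
    exact (Pi.single_nonneg (α := fun _ : n => ℝ)).mpr zero_le_one j
  · have h1 : (1 : n → ℝ) ᵥ* (1 - τ • A) = 1 := by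
      funext j
      simp [vecMul_one_sub_smul_apply, hA.sum_col]
    conv_lhs => rw [← h1]
    rw [vecMul_vecMul, mul_nonsing_inv _ hdet, vecMul_one]

theorem mulVec_inv_one_sub_smul_eq_self_iff (hA : IsColRateMatrix A) (hτ : 0 < τ)
    {w : n → ℝ} : (1 - τ • A)⁻¹ *ᵥ w = w ↔ A *ᵥ w = 0 := by
  have hdet := hA.isUnit_det_one_sub_smul hτ.le
  have hM : (1 - τ • A) *ᵥ w = w - τ • A *ᵥ w := by
    rw [sub_mulVec, one_mulVec, smul_mulVec]
  constructor
  · intro h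
    have : (1 - τ • A) *ᵥ w = w := by
      conv_lhs => rw [← h]
      rw [mulVec_mulVec, mul_nonsing_inv _ hdet, one_mulVec]
    rw [hM, sub_eq_self, smul_eq_zero] at this
    exact this.resolve_left hτ.ne'
  · intro h
    have : (1 - τ • A) *ᵥ w = w := by rw [hM, h, smul_zero, sub_zero]
    conv_lhs => rw [← this]
    rw [mulVec_mulVec, nonsing_inv_mul _ hdet, one_mulVec]

end IsColRateMatrix

end RateMatrix

end Matrix

theorem MatrixIrreducible.forall_of_closed {N : ℕ} {A : Matrix (Fin N) (Fin N) ℝ}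
    (hirr : MatrixIrreducible A) {P : Fin N → Prop} (hP : ∀ i j, P j → A i j ≠ 0 → P i)
    {p : Fin N} (hp : P p) (q : Fin N) : P q := by
  rcases eq_or_ne p q with rfl | hpq
  · exact hp
  obtain ⟨m, c, hc₀, hcm, hc⟩ := hirr p q hpq
  have hpath : ∀ l ≤ m, P (c l) := by
    intro l hl
    induction l with
    | zero => rwa [hc₀]
    | succ l ih => exact hP _ _ (ih (by omega)) (hc l (by omega))
  simpa [hcm] using hpath m le_rfl

namespace Matrix.IsColRateMatrix

variable {N : ℕ} {A : Matrix (Fin N) (Fin N) ℝ} {τ : ℝ}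

theorem pos_of_vecMul_one_sub_smul_nonneg (hA : IsColRateMatrix A) (hirr : MatrixIrreducible A)
    (hτ : 0 < τ) {y : Fin N → ℝ} (hy : ∀ j, 0 ≤ (y ᵥ* (1 - τ • A)) j) (hy₀ : y ≠ 0)
    (j : Fin N) : 0 < y j := by
  have hnonneg := hA.nonneg_of_vecMul_one_sub_smul_nonneg hτ.le hy
  refine (hnonneg j).lt_of_ne' fun hj =>
    hy₀ (funext (hirr.forall_of_closed (P := (y · = 0)) ?_ hj))
  -- at a zero `k` of `y`, `(y ᵥ* (1 - τ • A)) k = -τ * ∑ l, y l * A l k` is a nonpositive sum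
  -- of nonnegative terms, so all of them vanish
  intro i k hk hik
  have hterms : ∀ l, 0 ≤ y l * A l k := fun l => by
    rcases eq_or_ne l k with rfl | hlk
    · simp [hk]
    · exact mul_nonneg (hnonneg l) (hA.nonneg_of_ne l k hlk)
  have hyk := hy k
  rw [vecMul_one_sub_smul_apply, hk] at hyk
  have hsum : ∑ l, y l * A l k = 0 :=
    le_antisymm (by nlinarith) (sum_nonneg fun l _ => hterms l)
  rw [sum_eq_zero_iff_of_nonneg fun l _ => hterms l] at hsum
  exact (mul_eq_zero.mp (hsum i (mem_univ i))).resolve_right hik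

theorem inv_one_sub_smul_pos (hA : IsColRateMatrix A) (hirr : MatrixIrreducible A)
    (hτ : 0 < τ) (i j : Fin N) : 0 < (1 - τ • A)⁻¹ i j := by
  have hrow := row_inv_vecMul (hA.isUnit_det_one_sub_smul hτ.le) i
  refine hA.pos_of_vecMul_one_sub_smul_nonneg hirr hτ (fun k => ?_) (fun h => ?_) j
  · rw [hrow]
    exact (Pi.single_nonneg (α := fun _ : Fin N => ℝ)).mpr zero_le_one k
  · rw [h, zero_vecMul] at hrow
    simpa using congrFun hrow i

end Matrix.IsColRateMatrix

theorem implicit_euler_tendsto_steady_state_general (N : ℕ) (A : Matrix (Fin N) (Fin N) ℝ)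
    (hoff : ∀ i j, i ≠ j → 0 ≤ A i j) (hsum : ∀ j, ∑ i, A i j = 0)
    (hirr : MatrixIrreducible A) (τ : ℝ) (hτ : 0 < τ)
    (f : Fin N → ℝ) :
    ∃ w : Fin N → ℝ, A.mulVec w = 0 ∧ (∑ i, w i = ∑ i, f i) ∧
      (∀ w' : Fin N → ℝ, A.mulVec w' = 0 → (∑ i, w' i = ∑ i, f i) → w' = w) ∧
      Filter.Tendsto
        (fun k : ℕ => ((((1 : Matrix (Fin N) (Fin N) ℝ) - τ • A)⁻¹) ^ k).mulVec f)
        Filter.atTop (nhds w) := by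
  have hA : IsColRateMatrix A := ⟨hoff, hsum⟩
  obtain ⟨w, hfix, hw, huniq, hlim⟩ := exists_tendsto_pow_mulVec_of_pos
    (hA.inv_one_sub_smul_mem_colStochastic hτ.le) (hA.inv_one_sub_smul_pos hirr hτ) f
  simp only [hA.mulVec_inv_one_sub_smul_eq_self_iff hτ] at hfix huniq
  exact ⟨w, hfix, hw, huniq, hlim⟩

/-- For an irreducible `N × N` real matrix `A` with nonnegative off-diagonal entries
and zero column sums, any time step `τ > 0` and any strictly positive initial vector
`f`, the implicit Euler iterates `u^k = (I − τA)^{-k} f` converge, as `k → ∞`, to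
the unique kernel vector `w` of `A` with `∑ i, w i = ∑ i, f i`. -/
theorem implicit_euler_tendsto_steady_state (N : ℕ) (A : Matrix (Fin N) (Fin N) ℝ)
    (hoff : ∀ i j, i ≠ j → 0 ≤ A i j) (hsum : ∀ j, ∑ i, A i j = 0)
    (hirr : MatrixIrreducible A) (τ : ℝ) (hτ : 0 < τ)
    (f : Fin N → ℝ) (hf : ∀ i, 0 < f i) :
    ∃ w : Fin N → ℝ, A.mulVec w = 0 ∧ (∑ i, w i = ∑ i, f i) ∧
      (∀ w' : Fin N → ℝ, A.mulVec w' = 0 → (∑ i, w' i = ∑ i, f i) → w' = w) ∧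
      Filter.Tendsto
        (fun k : ℕ => ((((1 : Matrix (Fin N) (Fin N) ℝ) - τ • A)⁻¹) ^ k).mulVec f)
        Filter.atTop (nhds w) :=
  implicit_euler_tendsto_steady_state_general N A hoff hsum hirr τ hτ f
end
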